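/- arXiv:math-ph/0109002 — 5 statements merged into one kernel-verified Lean document; each statement's English description precedes it below -/
import Mathlib

section
/- Let F be a bounded operator with ‖F‖ ≤ 1 and Y a positive compact self-adjoint operator on a Hilbert space. Then Tr (F Y F*)^{1/2} ≤ Tr Y^{1/2}. -/
set_option maxHeartbeats 1000000

open scoped ComplexOrder Matrix InnerProductSpace
open Matrix

noncomputable def Matrix.PosSemidef.sqrt {n 𝕜 : Type*} [Fintype n] [DecidableEq n] [RCLike 𝕜]
    {A : Matrix n n 𝕜} (hA : A.PosSemidef) : Matrix n n 𝕜 :=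
  (hA.1.eigenvectorUnitary : Matrix n n 𝕜) * diagonal ((↑) ∘ (√·) ∘ hA.1.eigenvalues) *
    (star (hA.1.eigenvectorUnitary : Matrix n n 𝕜))

lemma Matrix.PosSemidef.posSemidef_sqrt {n : Type*} [Fintype n] [DecidableEq n]
    {A : Matrix n n ℂ} (hA : A.PosSemidef) : hA.sqrt.PosSemidef := by
  have hd : (diagonal ((↑) ∘ (√·) ∘ hA.1.eigenvalues : n → ℂ)).PosSemidef := by
    rw [posSemidef_diagonal_iff]
    intro i
    simp only [Function.comp_apply]
    exact_mod_cast Real.sqrt_nonneg _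
  have := hd.mul_mul_conjTranspose_same (hA.1.eigenvectorUnitary : Matrix n n ℂ)
  rw [← star_eq_conjTranspose] at this
  exact this

lemma Matrix.PosSemidef.sqrt_mul_self {n : Type*} [Fintype n] [DecidableEq n]
    {A : Matrix n n ℂ} (hA : A.PosSemidef) : hA.sqrt * hA.sqrt = A := by
  have hU : star (hA.1.eigenvectorUnitary : Matrix n n ℂ) * (hA.1.eigenvectorUnitary : Matrix n n ℂ) = 1 :=
    Unitary.star_mul_self_of_mem hA.1.eigenvectorUnitary.2
  conv_rhs => rw [hA.1.spectral_theorem, Unitary.conjStarAlgAut_apply]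
  simp only [Matrix.PosSemidef.sqrt]
  rw [show ∀ a b c d e f : Matrix n n ℂ, a * b * c * (d * e * f) = a * (b * (c * d) * e) * f by
    intro a b c d e f; simp only [mul_assoc], hU, mul_one, diagonal_mul_diagonal]
  congr 2
  ext i j
  simp only [diagonal_apply, Function.comp_apply]
  split_ifs with h
  · subst h
    rw [← RCLike.ofReal_mul, Real.mul_self_sqrt (hA.eigenvalues_nonneg _)]
  · rfl

section helpers

variable {m : Type*} [Fintype m] [DecidableEq m]

noncomputable def ee {m : Type*} [Fintype m] : (m → ℂ) → EuclideanSpace ℂ m :=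
  (WithLp.equiv 2 (m → ℂ)).symm

lemma inner_ee {m : Type*} [Fintype m] (v w : m → ℂ) :
    ⟪ee v, ee w⟫_ℂ = dotProduct (star v) w := dotProduct_comm _ _

lemma norm_ee_sq {m : Type*} [Fintype m] (v : m → ℂ) :
    dotProduct (star v) v = ((‖ee v‖ ^ 2 : ℝ) : ℂ) := by
  rw [← inner_ee, inner_self_eq_norm_sq_to_K]; norm_cast

lemma my_norm_mulVec_le {C : Matrix m m ℂ} (h : (1 - C * Cᴴ).PosSemidef) (v : m → ℂ) :
    ‖ee (Cᴴ *ᵥ v)‖ ≤ ‖ee v‖ := by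
  have h2 := h.dotProduct_mulVec_nonneg v
  rw [sub_mulVec, one_mulVec, dotProduct_sub, ← mulVec_mulVec] at h2
  have hrw : dotProduct (star v) (C *ᵥ (Cᴴ *ᵥ v))
      = dotProduct (star (Cᴴ *ᵥ v)) (Cᴴ *ᵥ v) := by
    rw [star_mulVec, conjTranspose_conjTranspose, ← dotProduct_mulVec]
  rw [hrw, sub_nonneg, norm_ee_sq, norm_ee_sq] at h2
  have h3 : ‖ee (Cᴴ *ᵥ v)‖ ^ 2 ≤ ‖ee v‖ ^ 2 := by exact_mod_cast h2
  nlinarith [norm_nonneg (ee (Cᴴ *ᵥ v)), norm_nonneg (ee v)]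

lemma my_one_sub_ct_mul_self {C : Matrix m m ℂ} (h : (1 - C * Cᴴ).PosSemidef) :
    (1 - Cᴴ * C).PosSemidef := by
  refine Matrix.PosSemidef.of_dotProduct_mulVec_nonneg ?_ ?_
  · exact isHermitian_one.sub (posSemidef_conjTranspose_mul_self C).1
  intro x
  have key : ‖ee (C *ᵥ x)‖ ≤ ‖ee x‖ := by
    rcases eq_or_lt_of_le (norm_nonneg (ee (C *ᵥ x))) with h0 | h0
    · rw [← h0]; exact norm_nonneg _
    have einner : ⟪ee x, ee (Cᴴ *ᵥ (C *ᵥ x))⟫_ℂ = ⟪ee (C *ᵥ x), ee (C *ᵥ x)⟫_ℂ := by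
      rw [inner_ee, inner_ee, dotProduct_mulVec, star_mulVec]
    have e1 : ‖ee (C *ᵥ x)‖ ^ 2 = ‖⟪ee x, ee (Cᴴ *ᵥ (C *ᵥ x))⟫_ℂ‖ := by
      rw [einner, inner_self_eq_norm_sq_to_K]
      simp [norm_pow]
    have e2 : ‖⟪ee x, ee (Cᴴ *ᵥ (C *ᵥ x))⟫_ℂ‖ ≤ ‖ee x‖ * ‖ee (C *ᵥ x)‖ :=
      le_trans (norm_inner_le_norm _ _)
        (mul_le_mul_of_nonneg_left (my_norm_mulVec_le h (C *ᵥ x)) (norm_nonneg _))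
    nlinarith
  have hrw : dotProduct (star x) ((1 - Cᴴ * C) *ᵥ x)
      = dotProduct (star x) x - dotProduct (star (C *ᵥ x)) (C *ᵥ x) := by
    rw [sub_mulVec, one_mulVec, dotProduct_sub, ← mulVec_mulVec]
    congr 1
    rw [star_mulVec, ← dotProduct_mulVec]
  rw [hrw, norm_ee_sq, norm_ee_sq, sub_nonneg]
  have h5 : ‖ee (C *ᵥ x)‖ ^ 2 ≤ ‖ee x‖ ^ 2 := by nlinarith [norm_nonneg (ee (C *ᵥ x))]
  exact_mod_cast h5

lemma my_diag_nonneg {M : Matrix m m ℂ} (hM : M.PosSemidef) (i : m) : 0 ≤ M i i := by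
  have := hM.dotProduct_mulVec_nonneg (Pi.single i 1)
  simpa [mulVec_single, dotProduct, Pi.single_apply, apply_ite] using this

lemma my_trace_nonneg {M : Matrix m m ℂ} (hM : M.PosSemidef) : 0 ≤ M.trace :=
  Finset.sum_nonneg fun i _ => my_diag_nonneg hM i

lemma my_trace_mono {A B : Matrix m m ℂ} (h : (B - A).PosSemidef) : A.trace ≤ B.trace := by
  have := my_trace_nonneg h
  rw [Matrix.trace_sub] at this
  exact sub_nonneg.mp this

lemma my_conj_trace_nonneg {P Q : Matrix m m ℂ} (hP : P.PosSemidef) (hQ : Q.PosSemidef) :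
    0 ≤ (P * Q).trace := by
  have hq : hQ.sqrt * hQ.sqrt = Q := hQ.sqrt_mul_self
  have hqh : hQ.sqrtᴴ = hQ.sqrt := hQ.posSemidef_sqrt.isHermitian
  have hpsd : (hQ.sqrt * P * hQ.sqrtᴴ).PosSemidef := hP.mul_mul_conjTranspose_same _
  have heq : (hQ.sqrt * P * hQ.sqrtᴴ).trace = (P * Q).trace := by
    rw [hqh, Matrix.trace_mul_comm (hQ.sqrt * P) hQ.sqrt, ← mul_assoc, hq,
      Matrix.trace_mul_comm]
  rw [← heq]
  exact my_trace_nonneg hpsd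

lemma my_mul_trace_mono {P A B : Matrix m m ℂ} (hP : P.PosSemidef)
    (h : (B - A).PosSemidef) : (P * A).trace ≤ (P * B).trace := by
  have := my_conj_trace_nonneg hP h
  rw [mul_sub, Matrix.trace_sub] at this
  exact sub_nonneg.mp this

lemma my_sqrt_det_isUnit {T : Matrix m m ℂ} (hT : T.PosDef) :
    IsUnit (hT.posSemidef.sqrt).det := by
  have hs : hT.posSemidef.sqrt * hT.posSemidef.sqrt = T := hT.posSemidef.sqrt_mul_self
  have hdet : (hT.posSemidef.sqrt).det * (hT.posSemidef.sqrt).det = T.det := by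
    rw [← det_mul, hs]
  refine isUnit_iff_ne_zero.mpr fun h0 => ?_
  rw [h0, mul_zero] at hdet
  exact hT.det_pos.ne' hdet.symm

lemma my_amgm {T A : Matrix m m ℂ} (hT : T.PosDef) (hA : A.PosSemidef) :
    hA.sqrt.trace + hA.sqrt.trace ≤ T.trace + (T⁻¹ * A).trace := by
  set B := hA.sqrt with hBdef
  set s := hT.posSemidef.sqrt with hsdef
  have hs : s * s = T := hT.posSemidef.sqrt_mul_self
  have hdet : IsUnit s.det := my_sqrt_det_isUnit hT
  have hrs : s⁻¹ * s = 1 := nonsing_inv_mul s hdet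
  have hsr : s * s⁻¹ = 1 := mul_nonsing_inv s hdet
  have hrr : s⁻¹ * s⁻¹ = T⁻¹ := by rw [← hs, Matrix.mul_inv_rev]
  have hsh : sᴴ = s := hT.posSemidef.posSemidef_sqrt.isHermitian
  have hrh : (s⁻¹)ᴴ = s⁻¹ := hT.posSemidef.posSemidef_sqrt.isHermitian.inv
  have hBh : Bᴴ = B := hA.posSemidef_sqrt.isHermitian
  have hBB : B * B = A := hA.sqrt_mul_self
  have hexp : (s - s⁻¹ * B)ᴴ * (s - s⁻¹ * B) = T - B - B + B * T⁻¹ * B := by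
    rw [conjTranspose_sub, conjTranspose_mul, hsh, hrh, hBh, sub_mul, mul_sub, mul_sub,
      hs, ← mul_assoc s s⁻¹ B, hsr, one_mul, mul_assoc B s⁻¹ s, hrs, mul_one,
      mul_assoc B s⁻¹ (s⁻¹ * B), ← mul_assoc s⁻¹ s⁻¹ B, hrr, ← mul_assoc B T⁻¹ B]
    abel
  have h0 := my_trace_nonneg (posSemidef_conjTranspose_mul_self (s - s⁻¹ * B))
  rw [hexp, Matrix.trace_add, Matrix.trace_sub, Matrix.trace_sub,
    Matrix.trace_mul_cycle B T⁻¹ B, hBB, Matrix.trace_mul_comm] at h0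
  rw [← sub_nonneg]
  convert h0 using 1
  ring

end helpers

/-- If `‖F‖ ≤ 1` (expressed as `F F* ≤ 1`, i.e. `1 - F Fᴴ ≥ 0`) and `Y`
is a positive semidefinite operator (here: matrix), then
`Tr (F Y F*)^{1/2} ≤ Tr Y^{1/2}`. -/
theorem stmt5 {n : ℕ} (F Y : Matrix (Fin n) (Fin n) ℂ)
    (hY : Y.PosSemidef)
    (hF : (1 - F * Fᴴ).PosSemidef)
    (hFYF : (F * Y * Fᴴ).PosSemidef) :
    (hFYF.sqrt).trace ≤ (hY.sqrt).trace := by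
  have ha0 : 0 ≤ hFYF.sqrt.trace := my_trace_nonneg hFYF.posSemidef_sqrt
  have hb0 : 0 ≤ hY.sqrt.trace := my_trace_nonneg hY.posSemidef_sqrt
  have hF' : ((1 : Matrix (Fin n) (Fin n) ℂ) - Fᴴ * F).PosSemidef :=
    my_one_sub_ct_mul_self hF
  have key : ∀ ε : ℝ, 0 < ε →
      hFYF.sqrt.trace + hFYF.sqrt.trace
        ≤ hY.sqrt.trace + hY.sqrt.trace + ((2 * n * ε : ℝ) : ℂ) := by
    intro ε hε
    set sY := hY.sqrt with hsYdef
    have hsY : sY * sY = Y := hY.sqrt_mul_self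
    set D : Matrix (Fin n) (Fin n) ℂ := diagonal (fun _ => (ε : ℂ)) with hDdef
    have hD : D.PosDef := Matrix.PosDef.diagonal fun _ => by
      exact_mod_cast hε
    set T₀ := sY + D with hT₀def
    have hT₀ : T₀.PosDef := Matrix.PosDef.posSemidef_add hY.posSemidef_sqrt hD
    set T := F * T₀ * Fᴴ + D with hTdef
    have hFT₀F : (F * T₀ * Fᴴ).PosSemidef := hT₀.posSemidef.mul_mul_conjTranspose_same F
    have hT : T.PosDef := Matrix.PosDef.posSemidef_add hFT₀F hD
    have h1 := my_amgm hT hFYF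
    -- trace of D and T₀
    have hDtr : D.trace = ((n * ε : ℝ) : ℂ) := by
      rw [hDdef, trace_diagonal]
      push_cast
      rw [Finset.sum_const, Finset.card_univ, Fintype.card_fin, nsmul_eq_mul]
    -- bound trace T
    have h2 : T.trace ≤ sY.trace + ((2 * n * ε : ℝ) : ℂ) := by
      have hc : (F * T₀ * Fᴴ).trace = (T₀ * (Fᴴ * F)).trace := by
        rw [Matrix.trace_mul_cycle F T₀ Fᴴ, Matrix.trace_mul_comm]
      have hm : (T₀ * (Fᴴ * F)).trace ≤ (T₀ * 1).trace :=
        my_mul_trace_mono hT₀.posSemidef hF'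
      rw [mul_one] at hm
      have : T.trace = (F * T₀ * Fᴴ).trace + D.trace := by rw [hTdef, Matrix.trace_add]
      rw [this, hc, hDtr]
      have hT₀tr : T₀.trace = sY.trace + ((n * ε : ℝ) : ℂ) := by
        rw [hT₀def, Matrix.trace_add, hDtr]
      calc (T₀ * (Fᴴ * F)).trace + ((n * ε : ℝ) : ℂ)
          ≤ T₀.trace + ((n * ε : ℝ) : ℂ) := add_le_add_left hm _
        _ = sY.trace + ((2 * n * ε : ℝ) : ℂ) := by
            rw [hT₀tr]; push_cast; ring
    -- square roots of T and T₀ and their inverses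
    set t := hT.posSemidef.sqrt with htdef
    have ht : t * t = T := hT.posSemidef.sqrt_mul_self
    have htdet : IsUnit t.det := my_sqrt_det_isUnit hT
    have hts : t⁻¹ * t = 1 := nonsing_inv_mul t htdet
    have hst : t * t⁻¹ = 1 := mul_nonsing_inv t htdet
    have htt : t⁻¹ * t⁻¹ = T⁻¹ := by rw [← ht, Matrix.mul_inv_rev]
    have hth : tᴴ = t := hT.posSemidef.posSemidef_sqrt.isHermitian
    have htih : (t⁻¹)ᴴ = t⁻¹ := hT.posSemidef.posSemidef_sqrt.isHermitian.inv
    set s₀ := hT₀.posSemidef.sqrt with hs₀def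
    have hs₀ : s₀ * s₀ = T₀ := hT₀.posSemidef.sqrt_mul_self
    have hs₀det : IsUnit s₀.det := my_sqrt_det_isUnit hT₀
    have hrs₀ : s₀⁻¹ * s₀ = 1 := nonsing_inv_mul s₀ hs₀det
    have hs₀r : s₀ * s₀⁻¹ = 1 := mul_nonsing_inv s₀ hs₀det
    have hr₀r₀ : s₀⁻¹ * s₀⁻¹ = T₀⁻¹ := by rw [← hs₀, Matrix.mul_inv_rev]
    have hs₀h : s₀ᴴ = s₀ := hT₀.posSemidef.posSemidef_sqrt.isHermitian
    have hr₀h : (s₀⁻¹)ᴴ = s₀⁻¹ := hT₀.posSemidef.posSemidef_sqrt.isHermitian.inv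
    -- the contraction G
    set G := t⁻¹ * F * s₀ with hGdef
    have hGh : Gᴴ = s₀ * Fᴴ * t⁻¹ := by
      rw [hGdef, conjTranspose_mul, conjTranspose_mul, hs₀h, htih, mul_assoc]
    have hGG : G * Gᴴ = t⁻¹ * (F * T₀ * Fᴴ) * t⁻¹ := by
      rw [hGh, hGdef, ← hs₀]
      simp only [mul_assoc]
    have h1m : (1 : Matrix (Fin n) (Fin n) ℂ) - G * Gᴴ = t⁻¹ * D * t⁻¹ := by
      have hFT : F * T₀ * Fᴴ = T - D := (add_sub_cancel_right (F * T₀ * Fᴴ) D).symm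
      have hone : t⁻¹ * T * t⁻¹ = 1 := by
        rw [← ht, show t⁻¹ * (t * t) * t⁻¹ = (t⁻¹ * t) * (t * t⁻¹) by
          simp only [mul_assoc], hts, hst, one_mul]
      rw [hGG, hFT, mul_sub, sub_mul, hone, sub_sub_cancel]
    have hGGpsd : ((1 : Matrix (Fin n) (Fin n) ℂ) - G * Gᴴ).PosSemidef := by
      have hc := hD.posSemidef.mul_mul_conjTranspose_same t⁻¹
      rw [htih] at hc
      rw [h1m]
      exact hc
    have hGc : ((1 : Matrix (Fin n) (Fin n) ℂ) - Gᴴ * G).PosSemidef :=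
      my_one_sub_ct_mul_self hGGpsd
    -- the operator inequality  Fᴴ T⁻¹ F ≤ T₀⁻¹
    have hM : (T₀⁻¹ - Fᴴ * (T⁻¹ * F)).PosSemidef := by
      have hpsd : (s₀⁻¹ * (1 - Gᴴ * G) * (s₀⁻¹)ᴴ).PosSemidef :=
        hGc.mul_mul_conjTranspose_same s₀⁻¹
      have hcalc : s₀⁻¹ * ((1 : Matrix (Fin n) (Fin n) ℂ) - Gᴴ * G) * (s₀⁻¹)ᴴ
          = T₀⁻¹ - Fᴴ * (T⁻¹ * F) := by
        have hinner : s₀⁻¹ * (Gᴴ * G) * s₀⁻¹ = Fᴴ * (T⁻¹ * F) := by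
          rw [hGh, hGdef]
          rw [show s₀⁻¹ * (s₀ * Fᴴ * t⁻¹ * (t⁻¹ * F * s₀)) * s₀⁻¹
              = (s₀⁻¹ * s₀) * (Fᴴ * ((t⁻¹ * t⁻¹) * (F * (s₀ * s₀⁻¹)))) by
            simp only [mul_assoc], hrs₀, hs₀r, htt, mul_one, one_mul]
        rw [hr₀h, mul_sub, sub_mul, mul_one, hr₀r₀, hinner]
      rw [← hcalc]
      exact hpsd
    -- bound the second trace
    have h3 : (T⁻¹ * (F * Y * Fᴴ)).trace ≤ (Y * T₀⁻¹).trace := by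
      have hre : (T⁻¹ * (F * Y * Fᴴ)).trace = (Y * (Fᴴ * (T⁻¹ * F))).trace := by
        rw [show F * Y * Fᴴ = F * (Y * Fᴴ) by rw [mul_assoc],
          ← mul_assoc T⁻¹ F (Y * Fᴴ), Matrix.trace_mul_comm (T⁻¹ * F) (Y * Fᴴ),
          mul_assoc Y Fᴴ (T⁻¹ * F)]
      rw [hre]
      exact my_mul_trace_mono hY hM
    have h4 : (Y * T₀⁻¹).trace ≤ sY.trace := by
      have hT₀det : IsUnit T₀.det := hT₀.det_pos.ne'.isUnit
      have hinvT₀ : T₀⁻¹ * T₀ = 1 := nonsing_inv_mul T₀ hT₀det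
      have hDsY : D * sY = (ε : ℂ) • sY := (smul_eq_diagonal_mul sY (ε:ℂ)).symm
      have hsplit : sY = T₀⁻¹ * Y + (ε : ℂ) • (T₀⁻¹ * sY) := by
        have : T₀ * sY = Y + (ε : ℂ) • sY := by
          rw [hT₀def, add_mul, hsY, hDsY]
        calc sY = (T₀⁻¹ * T₀) * sY := by rw [hinvT₀, one_mul]
          _ = T₀⁻¹ * (T₀ * sY) := by rw [mul_assoc]
          _ = T₀⁻¹ * Y + (ε : ℂ) • (T₀⁻¹ * sY) := by rw [this, mul_add, mul_smul_comm]
      have htr0 : 0 ≤ (T₀⁻¹ * sY).trace :=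
        my_conj_trace_nonneg hT₀.inv.posSemidef hY.posSemidef_sqrt
      have : sY.trace = (T₀⁻¹ * Y).trace + (ε : ℂ) * (T₀⁻¹ * sY).trace := by
        conv_lhs => rw [hsplit]
        rw [Matrix.trace_add, Matrix.trace_smul, smul_eq_mul]
      rw [Matrix.trace_mul_comm Y T₀⁻¹, this]
      have : 0 ≤ (ε : ℂ) * (T₀⁻¹ * sY).trace :=
        mul_nonneg (by exact_mod_cast hε.le) htr0
      exact le_add_of_nonneg_right this
    -- combine
    calc hFYF.sqrt.trace + hFYF.sqrt.trace
        ≤ T.trace + (T⁻¹ * (F * Y * Fᴴ)).trace := h1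
      _ ≤ (sY.trace + ((2 * n * ε : ℝ) : ℂ)) + sY.trace :=
          add_le_add h2 (h3.trans h4)
      _ = sY.trace + sY.trace + ((2 * n * ε : ℝ) : ℂ) := by ring
  -- pass to the limit
  have haim : hFYF.sqrt.trace.im = 0 := by
    have := (Complex.le_def.mp ha0).2
    simpa using this.symm
  have hbim : hY.sqrt.trace.im = 0 := by
    have := (Complex.le_def.mp hb0).2
    simpa using this.symm
  rw [Complex.le_def]
  refine ⟨?_, by rw [haim, hbim]⟩
  by_contra hcon
  push_neg at hcon
  set a := hFYF.sqrt.trace.re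
  set b := hY.sqrt.trace.re
  have hδ : 0 < (a - b) / (2 * n + 2) :=
    div_pos (sub_pos.mpr hcon) (by positivity)
  have hk := key _ hδ
  have hre := (Complex.le_def.mp hk).1
  simp only [Complex.add_re, Complex.ofReal_re] at hre
  have hδd : ((a - b) / (2 * (n:ℝ) + 2)) * (2 * (n:ℝ) + 2) = a - b :=
    div_mul_cancel₀ _ (by positivity)
  nlinarith [hre, hδ, hδd]
end

section
/- If a self-adjoint operator D anticommutes with a unitary U (i.e. U D U* = -D) and 0 ∉ spec(D), then for any self-adjoint S commuting with U (in particular S of block-diagonal form diag(Y,Y) when U = [[0,I],[-I,0]]), the operators P⁺ S P⁺ and P⁻ S P⁻ are unitarily equivalent, where P^± are the positive/negative spectral projections of D. Consequently Tr[P⁺ S P⁺]₋ ≤ (1/2) Tr[S]₋. -/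
open Matrix
open scoped Matrix ComplexOrder

/-- The trace of the negative part `[X]₋` of a Hermitian matrix `X`:
the sum of `max(-λᵢ, 0)` over the eigenvalues `λᵢ` of `X`. -/
noncomputable def negPartTrace {n : ℕ} {X : Matrix (Fin n) (Fin n) ℂ}
    (hX : X.IsHermitian) : ℝ :=
  ∑ i, max (-hX.eigenvalues i) 0

section Aux
variable {n : ℕ}


lemma diag_nonneg' {M : Matrix (Fin n) (Fin n) ℂ} (hM : M.PosSemidef) (i : Fin n) :
    0 ≤ (M i i).re := by
  have h := hM.dotProduct_mulVec_nonneg (Pi.single i 1)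
  rw [Complex.le_def] at h
  simpa [dotProduct, mulVec, Pi.single_apply, Finset.sum_ite_eq] using h.1

lemma herm_diag_im {M : Matrix (Fin n) (Fin n) ℂ} (hM : M.IsHermitian) (i : Fin n) :
    (M i i).im = 0 := by
  have := hM.apply i i
  rw [← this]
  simp [Complex.conj_eq_iff_im] at this ⊢
  exact this

lemma proj_eq {D P : Matrix (Fin n) (Fin n) ℂ} (hD : D.IsHermitian) (hDinv : IsUnit D)
    (hP : P.IsHermitian) (hP2 : P * P = P)
    (hpos : (D * P).PosSemidef) (hneg : ((-D) * (1 - P)).PosSemidef) :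
    P = (hD.eigenvectorUnitary : Matrix (Fin n) (Fin n) ℂ) *
        diagonal (fun i => if 0 < hD.eigenvalues i then (1:ℂ) else 0) *
        (hD.eigenvectorUnitary : Matrix (Fin n) (Fin n) ℂ)ᴴ := by
  set V : Matrix (Fin n) (Fin n) ℂ := (hD.eigenvectorUnitary : Matrix (Fin n) (Fin n) ℂ) with hV
  have hV1 : Vᴴ * V = 1 := by
    simpa [star_eq_conjTranspose] using mem_unitaryGroup_iff'.mp hD.eigenvectorUnitary.2
  have hV2 : V * Vᴴ = 1 := by
    simpa [star_eq_conjTranspose] using mem_unitaryGroup_iff.mp hD.eigenvectorUnitary.2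
  set μ : Fin n → ℝ := hD.eigenvalues with hμ
  have hspec : D = V * diagonal (fun i => (μ i : ℂ)) * Vᴴ := by
    have := hD.spectral_theorem
    exact this
  set M : Matrix (Fin n) (Fin n) ℂ := Vᴴ * P * V with hMdef
  have hM : M.IsHermitian := isHermitian_conjTranspose_mul_mul V hP
  have hM2 : M * M = M := by
    rw [hMdef]
    calc (Vᴴ * P * V) * (Vᴴ * P * V) = Vᴴ * (P * (V * Vᴴ) * P) * V := by noncomm_ring
    _ = Vᴴ * P * V := by rw [hV2, Matrix.mul_one, hP2]
  -- μ i ≠ 0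
  have hμne : ∀ i, μ i ≠ 0 := by
    intro i hzero
    have hdet : D.det ≠ 0 := by
      simpa [isUnit_iff_ne_zero] using hDinv.map (Matrix.detMonoidHom (n := Fin n) (R := ℂ))
    rw [hD.det_eq_prod_eigenvalues] at hdet
    exact hdet (Finset.prod_eq_zero (Finset.mem_univ i) (Complex.ofReal_eq_zero.mpr hzero))
  -- conjugated positivity
  have hpos' : (diagonal (fun i => (μ i : ℂ)) * M).PosSemidef := by
    have h := hpos.conjTranspose_mul_mul_same V
    have : Vᴴ * (D * P) * V = diagonal (fun i => (μ i : ℂ)) * M := by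
      rw [hspec, hMdef]
      calc Vᴴ * (V * diagonal (fun i => (μ i : ℂ)) * Vᴴ * P) * V
          = (Vᴴ * V) * diagonal (fun i => (μ i : ℂ)) * (Vᴴ * P * V) := by noncomm_ring
        _ = diagonal (fun i => (μ i : ℂ)) * (Vᴴ * P * V) := by rw [hV1, Matrix.one_mul]
    rwa [this] at h
  have hneg' : (diagonal (fun i => (-μ i : ℂ)) * (1 - M)).PosSemidef := by
    have h := hneg.conjTranspose_mul_mul_same V
    have : Vᴴ * ((-D) * (1 - P)) * V = diagonal (fun i => (-μ i : ℂ)) * (1 - M) := by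
      have hnegD : (-D : Matrix (Fin n) (Fin n) ℂ) = V * diagonal (fun i => (-μ i : ℂ)) * Vᴴ := by
        have hd : diagonal (fun i => (-μ i : ℂ)) = -diagonal (fun i => (μ i : ℂ)) := by
          ext i j; by_cases h : i = j <;> simp [Matrix.diagonal_apply, h]
        rw [hd, hspec]
        noncomm_ring
      rw [hnegD, hMdef]
      have h1M : 1 - (Vᴴ * P * V) = Vᴴ * (1 - P) * V := by
        rw [Matrix.mul_sub, Matrix.sub_mul, Matrix.mul_one, hV1]
      rw [h1M]
      calc Vᴴ * (V * diagonal (fun i => (-μ i : ℂ)) * Vᴴ * (1 - P)) * V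
          = (Vᴴ * V) * diagonal (fun i => (-μ i : ℂ)) * (Vᴴ * (1 - P) * V) := by noncomm_ring
        _ = diagonal (fun i => (-μ i : ℂ)) * (Vᴴ * (1 - P) * V) := by rw [hV1, Matrix.one_mul]
    rwa [this] at h
  -- M is PSD and 1 - M is PSD
  have hMpsd : M.PosSemidef := by
    have : M = Mᴴ * M := by rw [hM.eq, hM2]
    rw [this]; exact posSemidef_conjTranspose_mul_self M
  have h1M2 : (1 - M) * (1 - M) = 1 - M := by
    have : (1 - M) * (1 - M) = 1 - M - M + M * M := by noncomm_ring
    rw [this, hM2]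
    abel
  have h1Mherm : (1 - M).IsHermitian := (isHermitian_one).sub hM
  have h1Mpsd : (1 - M).PosSemidef := by
    have : (1 - M) = (1 - M)ᴴ * (1 - M) := by rw [h1Mherm.eq, h1M2]
    rw [this]; exact posSemidef_conjTranspose_mul_self _
  -- diagonal entries of M
  have hdiagM : ∀ i, M i i = (if 0 < μ i then (1:ℂ) else 0) := by
    intro i
    have him : (M i i).im = 0 := herm_diag_im hM i
    have h0 : 0 ≤ (M i i).re := diag_nonneg' hMpsd i
    have h1 : (M i i).re ≤ 1 := by
      have := diag_nonneg' h1Mpsd i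
      simp [Matrix.sub_apply, Matrix.one_apply] at this
      linarith
    have hre1 : 0 ≤ μ i * (M i i).re := by
      have := diag_nonneg' hpos' i
      have hentry : (diagonal (fun i => (μ i : ℂ)) * M) i i = (μ i : ℂ) * M i i := by
        simp [Matrix.mul_apply, Matrix.diagonal_apply, Finset.sum_ite_eq]
      rw [hentry] at this
      simpa [Complex.ofReal_mul, Complex.mul_re, him] using this
    have hre2 : 0 ≤ (-μ i) * (1 - (M i i).re) := by
      have := diag_nonneg' hneg' i
      have hentry : (diagonal (fun i => (-μ i : ℂ)) * (1 - M)) i i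
          = (-μ i : ℂ) * ((1 - M) i i) := by
        simp [Matrix.mul_apply, Matrix.diagonal_apply, Finset.sum_ite_eq]
      rw [hentry] at this
      have him' : ((1 - M) i i).im = 0 := by
        simp [Matrix.sub_apply, Matrix.one_apply, him]
      have hre' : ((1 - M) i i).re = 1 - (M i i).re := by
        simp [Matrix.sub_apply, Matrix.one_apply]
      simpa [Complex.mul_re, him', hre'] using this
    rcases lt_trichotomy (μ i) 0 with hlt | heq | hgt
    · have : (M i i).re = 0 := by nlinarith
      simp [hlt.not_gt, Complex.ext_iff, this, him]
    · exact absurd heq (hμne i)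
    · have : (M i i).re = 1 := by nlinarith
      simp [hgt, Complex.ext_iff, this, him]
  -- off-diagonal entries vanish
  have hoff : ∀ i j, i ≠ j → M i j = 0 := by
    intro i j hij
    have hsum : ∑ k, Complex.normSq (M i k) = (M i i).re := by
      have h := congrArg (fun A : Matrix (Fin n) (Fin n) ℂ => (A i i).re) hM2
      simp only [Matrix.mul_apply] at h
      rw [← h]
      rw [Complex.re_sum]
      congr 1
      ext k
      have hk : M k i = star (M i k) := (hM.apply k i).symm
      rw [hk]
      simp [Complex.normSq_apply, Complex.mul_re]
    have hMii : (M i i).re = 0 ∨ (M i i).re = 1 := by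
      rcases lt_or_ge 0 (μ i) with h | h
      · right; rw [hdiagM i]; simp [h]
      · left; rw [hdiagM i]; simp [not_lt.mpr h]
    have hsq : Complex.normSq (M i i) = (M i i).re := by
      have him : (M i i).im = 0 := herm_diag_im hM i
      rcases hMii with h | h <;> simp [Complex.normSq_apply, h, him]
    have hrest : ∑ k ∈ Finset.univ.erase i, Complex.normSq (M i k) = 0 := by
      have hsplit := Finset.add_sum_erase Finset.univ (fun k => Complex.normSq (M i k))
        (Finset.mem_univ i)
      rw [hsum] at hsplit
      linarith [hsq]
    have : Complex.normSq (M i j) = 0 := by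
      have hnn : ∀ k ∈ Finset.univ.erase i, 0 ≤ Complex.normSq (M i k) :=
        fun k _ => Complex.normSq_nonneg _
      have := (Finset.sum_eq_zero_iff_of_nonneg hnn).mp hrest j
        (Finset.mem_erase.mpr ⟨hij.symm, Finset.mem_univ j⟩)
      exact this
    exact Complex.normSq_eq_zero.mp this
  have hMdiag : M = diagonal (fun i => if 0 < μ i then (1:ℂ) else 0) := by
    ext i j
    by_cases hij : i = j
    · subst hij; rw [hdiagM i]; simp [Matrix.diagonal_apply]
    · rw [hoff i j hij]; simp [Matrix.diagonal_apply, hij]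
  calc P = (V * Vᴴ) * P * (V * Vᴴ) := by rw [hV2, Matrix.one_mul, Matrix.mul_one]
    _ = V * M * Vᴴ := by rw [hMdef]; noncomm_ring
    _ = V * diagonal (fun i => if 0 < μ i then (1:ℂ) else 0) * Vᴴ := by rw [hMdiag]

lemma trace_diag_mul (d : Fin n → ℂ) (B : Matrix (Fin n) (Fin n) ℂ) :
    (diagonal d * B).trace = ∑ i, d i * B i i := by
  simp [Matrix.trace, Matrix.diag, Matrix.mul_apply, Matrix.diagonal_apply,
    Finset.sum_ite_eq]

lemma trace_le {X T : Matrix (Fin n) (Fin n) ℂ} (hX : X.IsHermitian)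
    (hT : T.PosSemidef) (hT1 : (1 - T).PosSemidef) :
    -((X * T).trace).re ≤ negPartTrace hX := by
  set V : Matrix (Fin n) (Fin n) ℂ := (hX.eigenvectorUnitary : Matrix (Fin n) (Fin n) ℂ) with hV
  have hV1 : Vᴴ * V = 1 := by
    simpa [star_eq_conjTranspose] using mem_unitaryGroup_iff'.mp hX.eigenvectorUnitary.2
  have hV2 : V * Vᴴ = 1 := by
    simpa [star_eq_conjTranspose] using mem_unitaryGroup_iff.mp hX.eigenvectorUnitary.2
  set μ : Fin n → ℝ := hX.eigenvalues with hμ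
  have hspec : X = V * diagonal (fun i => (μ i : ℂ)) * Vᴴ := by
    have := hX.spectral_theorem
    exact this
  set N : Matrix (Fin n) (Fin n) ℂ := Vᴴ * T * V with hNdef
  have hNpsd : N.PosSemidef := hT.conjTranspose_mul_mul_same V
  have h1Npsd : (1 - N).PosSemidef := by
    have h := hT1.conjTranspose_mul_mul_same V
    have : Vᴴ * (1 - T) * V = 1 - N := by
      rw [Matrix.mul_sub, Matrix.sub_mul, Matrix.mul_one, hV1, hNdef]
    rwa [this] at h
  have htr : (X * T).trace = ∑ i, (μ i : ℂ) * N i i := by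
    rw [hspec]
    have : V * diagonal (fun i => (μ i : ℂ)) * Vᴴ * T
        = V * (diagonal (fun i => (μ i : ℂ)) * (Vᴴ * T)) := by noncomm_ring
    rw [this, Matrix.trace_mul_comm]
    have h2 : diagonal (fun i => (μ i : ℂ)) * (Vᴴ * T) * V
        = diagonal (fun i => (μ i : ℂ)) * N := by rw [hNdef]; noncomm_ring
    rw [h2, trace_diag_mul]
  rw [htr, Complex.re_sum]
  rw [negPartTrace, ← Finset.sum_neg_distrib]
  apply Finset.sum_le_sum
  intro i _
  have h0 : 0 ≤ (N i i).re := diag_nonneg' hNpsd i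
  have h1 : (N i i).re ≤ 1 := by
    have := diag_nonneg' h1Npsd i
    simp [Matrix.sub_apply, Matrix.one_apply] at this
    linarith
  have hre : ((μ i : ℂ) * N i i).re = μ i * (N i i).re := by
    simp [Complex.mul_re]
  rw [hre]
  rcases le_or_gt 0 (μ i) with h | h
  · have : -(μ i * (N i i).re) ≤ 0 := by nlinarith
    exact this.trans (le_max_right _ _)
  · have : -(μ i * (N i i).re) ≤ -μ i := by nlinarith
    exact this.trans (le_max_left _ _)

lemma trace_eq {X : Matrix (Fin n) (Fin n) ℂ} (hX : X.IsHermitian) :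
    ∃ T : Matrix (Fin n) (Fin n) ℂ, T.PosSemidef ∧ (1 - T).PosSemidef ∧
      ((X * T).trace).re = -negPartTrace hX := by
  set V : Matrix (Fin n) (Fin n) ℂ := (hX.eigenvectorUnitary : Matrix (Fin n) (Fin n) ℂ) with hV
  have hV1 : Vᴴ * V = 1 := by
    simpa [star_eq_conjTranspose] using mem_unitaryGroup_iff'.mp hX.eigenvectorUnitary.2
  have hV2 : V * Vᴴ = 1 := by
    simpa [star_eq_conjTranspose] using mem_unitaryGroup_iff.mp hX.eigenvectorUnitary.2
  set μ : Fin n → ℝ := hX.eigenvalues with hμ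
  have hspec : X = V * diagonal (fun i => (μ i : ℂ)) * Vᴴ := by
    have := hX.spectral_theorem
    exact this
  set d : Fin n → ℂ := fun i => if μ i < 0 then 1 else 0 with hd
  refine ⟨V * diagonal d * Vᴴ, ?_, ?_, ?_⟩
  · apply PosSemidef.mul_mul_conjTranspose_same
    apply PosSemidef.diagonal
    intro i
    rw [hd]
    dsimp only
    split <;> simp
  · have : 1 - V * diagonal d * Vᴴ = V * diagonal (fun i => 1 - d i) * Vᴴ := by
      have hdd : diagonal (fun i => (1:ℂ) - d i) = 1 - diagonal d := by
        ext i j; by_cases h : i = j <;> simp [Matrix.diagonal_apply, Matrix.one_apply, h]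
      rw [hdd, Matrix.mul_sub, Matrix.sub_mul, Matrix.mul_one, hV2]
    rw [this]
    apply PosSemidef.mul_mul_conjTranspose_same
    apply PosSemidef.diagonal
    intro i
    rw [hd]
    dsimp only
    split <;> simp
  · have hXT : X * (V * diagonal d * Vᴴ)
        = V * (diagonal (fun i => (μ i : ℂ)) * diagonal d) * Vᴴ := by
      rw [hspec]
      calc V * diagonal (fun i => (μ i : ℂ)) * Vᴴ * (V * diagonal d * Vᴴ)
          = V * diagonal (fun i => (μ i : ℂ)) * (Vᴴ * V) * diagonal d * Vᴴ := by noncomm_ring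
        _ = V * (diagonal (fun i => (μ i : ℂ)) * diagonal d) * Vᴴ := by
            rw [hV1, Matrix.mul_one]; noncomm_ring
    rw [hXT]
    have htr : (V * (diagonal (fun i => (μ i : ℂ)) * diagonal d) * Vᴴ).trace
        = (diagonal (fun i => (μ i : ℂ)) * diagonal d).trace := by
      rw [Matrix.trace_mul_comm, ← Matrix.mul_assoc, hV1, Matrix.one_mul]
    rw [htr, Matrix.diagonal_mul_diagonal, Matrix.trace_diagonal]
    rw [Complex.re_sum, negPartTrace, ← Finset.sum_neg_distrib]
    apply Finset.sum_congr rfl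
    intro i _
    rw [hd]
    dsimp only
    rcases lt_or_ge (μ i) 0 with h | h
    · simp [← hμ, h, max_eq_left (by linarith : (0:ℝ) ≤ -μ i)]
    · simp [← hμ, not_lt.mpr h, max_eq_right (by linarith : -μ i ≤ (0:ℝ))]

end Aux

/-- If a Hermitian `D` with `0 ∉ spec D` (invertibility) anticommutes
with a unitary `U` (`U D U* = -D`), and a Hermitian `S` commutes with `U`, then
`P⁺ S P⁺` and `P⁻ S P⁻` are unitarily equivalent, where `P^±` are the spectral
projections of `D` onto the positive/negative spectral subspaces (characterized as
complementary commuting Hermitian idempotents with `D P⁺ ≥ 0`, `-D P⁻ ≥ 0`).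
Consequently `Tr [P⁺ S P⁺]₋ ≤ (1/2) Tr [S]₋`. -/
theorem stmt8 {n : ℕ} (D U S Pp Pm : Matrix (Fin n) (Fin n) ℂ)
    (hD : D.IsHermitian) (hDinv : IsUnit D)
    (hU : U ∈ Matrix.unitaryGroup (Fin n) ℂ)
    (hanti : U * D * Uᴴ = -D)
    (hS : S.IsHermitian) (hSU : S * U = U * S)
    (hPp : Pp.IsHermitian) (hPm : Pm.IsHermitian)
    (hPp2 : Pp * Pp = Pp) (hPm2 : Pm * Pm = Pm)
    (hsum : Pp + Pm = 1)
    (hPpD : Pp * D = D * Pp) (hPmD : Pm * D = D * Pm)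
    (hpos : (D * Pp).PosSemidef) (hneg : ((-D) * Pm).PosSemidef)
    (hPSP : (Pp * S * Pp).IsHermitian) :
    Pm * S * Pm = Uᴴ * (Pp * S * Pp) * U ∧
    negPartTrace hPSP ≤ (1/2) * negPartTrace hS := by
  have hU1 : Uᴴ * U = 1 := by
    simpa [star_eq_conjTranspose] using mem_unitaryGroup_iff'.mp hU
  have hU2 : U * Uᴴ = 1 := by
    simpa [star_eq_conjTranspose] using mem_unitaryGroup_iff.mp hU
  have hPmPp : Pm = 1 - Pp := by rw [← hsum]; abel
  have hUD : U * D = -(D * U) := by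
    have h := congrArg (fun A => A * U) hanti
    simp only [Matrix.mul_assoc] at h
    rw [hU1, Matrix.mul_one] at h
    simpa [Matrix.neg_mul, Matrix.mul_assoc] using h
  have hDU : D * U = -(U * D) := by rw [hUD, neg_neg]
  -- the candidate projection B' = U * Pm * Uᴴ satisfies the hypotheses of proj_eq
  have hB : (U * Pm * Uᴴ).IsHermitian := by
    have h := isHermitian_mul_mul_conjTranspose U hPm
    exact h
  have hB2 : (U * Pm * Uᴴ) * (U * Pm * Uᴴ) = U * Pm * Uᴴ := by
    calc (U * Pm * Uᴴ) * (U * Pm * Uᴴ) = U * (Pm * (Uᴴ * U) * Pm) * Uᴴ := by noncomm_ring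
      _ = U * (Pm * Pm) * Uᴴ := by rw [hU1, Matrix.mul_one]
      _ = U * Pm * Uᴴ := by rw [hPm2]
  have hBpos : (D * (U * Pm * Uᴴ)).PosSemidef := by
    have heq : D * (U * Pm * Uᴴ) = U * ((-D) * Pm) * Uᴴ := by
      calc D * (U * Pm * Uᴴ) = (D * U) * Pm * Uᴴ := by noncomm_ring
        _ = (-(U * D)) * Pm * Uᴴ := by rw [hDU]
        _ = U * ((-D) * Pm) * Uᴴ := by noncomm_ring
    rw [heq]; exact hneg.mul_mul_conjTranspose_same U
  have h1B : 1 - U * Pm * Uᴴ = U * Pp * Uᴴ := by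
    rw [hPmPp, Matrix.mul_sub, Matrix.sub_mul, Matrix.mul_one, hU2]
    abel
  have hBneg : ((-D) * (1 - (U * Pm * Uᴴ))).PosSemidef := by
    have heq : (-D) * (U * Pp * Uᴴ) = U * (D * Pp) * Uᴴ := by
      calc (-D) * (U * Pp * Uᴴ) = (-(D * U)) * Pp * Uᴴ := by noncomm_ring
        _ = (-(-(U * D))) * Pp * Uᴴ := by rw [hDU]
        _ = U * (D * Pp) * Uᴴ := by noncomm_ring
    rw [h1B, heq]; exact hpos.mul_mul_conjTranspose_same U
  have hPpneg : ((-D) * (1 - Pp)).PosSemidef := by rw [← hPmPp]; exact hneg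
  have e1 := proj_eq hD hDinv hPp hPp2 hpos hPpneg
  have e2 := proj_eq hD hDinv hB hB2 hBpos hBneg
  have hkey : U * Pm * Uᴴ = Pp := by rw [e2, ← e1]
  have hPmE : Pm = Uᴴ * Pp * U := by
    calc Pm = (Uᴴ * U) * Pm * (Uᴴ * U) := by rw [hU1, Matrix.one_mul, Matrix.mul_one]
      _ = Uᴴ * (U * Pm * Uᴴ) * U := by noncomm_ring
      _ = Uᴴ * Pp * U := by rw [hkey]
  have hUSU : U * S * Uᴴ = S := by
    rw [← hSU, Matrix.mul_assoc, hU2, Matrix.mul_one]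
  have part1 : Pm * S * Pm = Uᴴ * (Pp * S * Pp) * U := by
    rw [hPmE]
    calc (Uᴴ * Pp * U) * S * (Uᴴ * Pp * U) = Uᴴ * Pp * (U * S * Uᴴ) * Pp * U := by noncomm_ring
      _ = Uᴴ * Pp * S * Pp * U := by rw [hUSU]
      _ = Uᴴ * (Pp * S * Pp) * U := by noncomm_ring
  refine ⟨part1, ?_⟩
  -- Part 2
  have hPmSPm : (Pm * S * Pm).IsHermitian := by
    have h := isHermitian_conjTranspose_mul_mul Pm hS
    rwa [hPm.eq] at h
  have hPpS_eq : Pp * S * Pp = U * (Pm * S * Pm) * Uᴴ := by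
    rw [part1]
    calc Pp * S * Pp = (U * Uᴴ) * (Pp * S * Pp) * (U * Uᴴ) := by
          rw [hU2, Matrix.one_mul, Matrix.mul_one]
      _ = U * (Uᴴ * (Pp * S * Pp) * U) * Uᴴ := by noncomm_ring
  -- negPartTrace hPSP ≤ negPartTrace hPmSPm
  obtain ⟨T0, hT0, hT0', htr0⟩ := trace_eq hPSP
  have h1 : negPartTrace hPSP ≤ negPartTrace hPmSPm := by
    have htr' : ((Pp * S * Pp) * T0).trace = ((Pm * S * Pm) * (Uᴴ * T0 * U)).trace := by
      rw [hPpS_eq]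
      have ha : U * (Pm * S * Pm) * Uᴴ * T0 = U * ((Pm * S * Pm) * Uᴴ * T0) := by noncomm_ring
      rw [ha, Matrix.trace_mul_comm]
      congr 1
      noncomm_ring
    have hpsd1 : (Uᴴ * T0 * U).PosSemidef := hT0.conjTranspose_mul_mul_same U
    have hpsd2 : (1 - Uᴴ * T0 * U).PosSemidef := by
      have : 1 - Uᴴ * T0 * U = Uᴴ * (1 - T0) * U := by
        rw [Matrix.mul_sub, Matrix.sub_mul, Matrix.mul_one, hU1]
      rw [this]; exact hT0'.conjTranspose_mul_mul_same U
    have hb := trace_le hPmSPm hpsd1 hpsd2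
    rw [← htr', htr0] at hb
    linarith
  -- the pinching bound
  obtain ⟨T1, hT1, hT1', htr1⟩ := trace_eq hPSP
  obtain ⟨T2, hT2, hT2', htr2⟩ := trace_eq hPmSPm
  have hTpsd : (Pp * T1 * Pp + Pm * T2 * Pm).PosSemidef := by
    have ha : (Pp * T1 * Ppᴴ).PosSemidef := hT1.mul_mul_conjTranspose_same Pp
    have hb : (Pm * T2 * Pmᴴ).PosSemidef := hT2.mul_mul_conjTranspose_same Pm
    rw [hPp.eq] at ha; rw [hPm.eq] at hb
    exact ha.add hb
  have h1T : (1 - (Pp * T1 * Pp + Pm * T2 * Pm)).PosSemidef := by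
    have hId : 1 - (Pp * T1 * Pp + Pm * T2 * Pm)
        = Pp * (1 - T1) * Pp + Pm * (1 - T2) * Pm := by
      have e : Pp * (1 - T1) * Pp + Pm * (1 - T2) * Pm
          = Pp * Pp + Pm * Pm - (Pp * T1 * Pp + Pm * T2 * Pm) := by noncomm_ring
      rw [e, hPp2, hPm2, hsum]
    rw [hId]
    have ha : (Pp * (1 - T1) * Ppᴴ).PosSemidef := hT1'.mul_mul_conjTranspose_same Pp
    have hb : (Pm * (1 - T2) * Pmᴴ).PosSemidef := hT2'.mul_mul_conjTranspose_same Pm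
    rw [hPp.eq] at ha; rw [hPm.eq] at hb
    exact ha.add hb
  have htrS : ((S * (Pp * T1 * Pp + Pm * T2 * Pm)).trace).re
      = (((Pp * S * Pp) * T1).trace).re + (((Pm * S * Pm) * T2).trace).re := by
    rw [Matrix.mul_add, Matrix.trace_add]
    have e1 : S * (Pp * T1 * Pp) = (S * Pp * T1) * Pp := by noncomm_ring
    have e2 : S * (Pm * T2 * Pm) = (S * Pm * T2) * Pm := by noncomm_ring
    rw [e1, e2, Matrix.trace_mul_comm (S * Pp * T1) Pp, Matrix.trace_mul_comm (S * Pm * T2) Pm]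
    have e3 : Pp * (S * Pp * T1) = (Pp * S * Pp) * T1 := by noncomm_ring
    have e4 : Pm * (S * Pm * T2) = (Pm * S * Pm) * T2 := by noncomm_ring
    rw [e3, e4, Complex.add_re]
  have hfinal := trace_le hS hTpsd h1T
  rw [htrS, htr1, htr2] at hfinal
  linarith
end

section
/- (BKS inequality, finite-dimensional case) Let A and B be positive semidefinite n×n Hermitian matrices. Then Tr[A - B]₋ ≤ Tr([A² - B²]₋)^{1/2}, where [X]₋ denotes the negative part of the Hermitian matrix X. -/
open Matrix
open scoped ComplexOrder

namespace BKS

variable {n : ℕ}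

/-- Functional calculus for a Hermitian matrix via its spectral decomposition. -/
noncomputable def fc {X : Matrix (Fin n) (Fin n) ℂ} (hX : X.IsHermitian) (f : ℝ → ℝ) :
    Matrix (Fin n) (Fin n) ℂ :=
  (hX.eigenvectorUnitary : Matrix (Fin n) (Fin n) ℂ) *
    diagonal (fun i => (f (hX.eigenvalues i) : ℂ)) *
    (star (hX.eigenvectorUnitary : Matrix (Fin n) (Fin n) ℂ))

variable {X : Matrix (Fin n) (Fin n) ℂ} (hX : X.IsHermitian) (f g h : ℝ → ℝ)

lemma U_mul_star : (hX.eigenvectorUnitary : Matrix (Fin n) (Fin n) ℂ) *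
    (star (hX.eigenvectorUnitary : Matrix (Fin n) (Fin n) ℂ)) = 1 :=
  (Matrix.mem_unitaryGroup_iff).mp (hX.eigenvectorUnitary).2

lemma star_mul_U : (star (hX.eigenvectorUnitary : Matrix (Fin n) (Fin n) ℂ)) *
    (hX.eigenvectorUnitary : Matrix (Fin n) (Fin n) ℂ) = 1 :=
  (Matrix.mem_unitaryGroup_iff').mp (hX.eigenvectorUnitary).2

lemma conj_mul_conj (U D E : Matrix (Fin n) (Fin n) ℂ) (hU : star U * U = 1) :
    (U * D * star U) * (U * E * star U) = U * (D * E) * star U := by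
  simp only [Matrix.mul_assoc]
  rw [← Matrix.mul_assoc (star U) U (E * star U), hU, Matrix.one_mul]

lemma fc_isHermitian : (fc hX f).IsHermitian := by
  unfold fc
  rw [show (star (hX.eigenvectorUnitary : Matrix (Fin n) (Fin n) ℂ)) =
    (hX.eigenvectorUnitary : Matrix (Fin n) (Fin n) ℂ)ᴴ from rfl]
  apply isHermitian_mul_mul_conjTranspose
  rw [Matrix.IsHermitian, diagonal_conjTranspose]
  simp [Pi.star_def, Complex.conj_ofReal]

lemma fc_mul (hfg : ∀ i, f (hX.eigenvalues i) * g (hX.eigenvalues i) = h (hX.eigenvalues i)) :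
    fc hX f * fc hX g = fc hX h := by
  unfold fc
  rw [conj_mul_conj _ _ _ (star_mul_U hX), diagonal_mul_diagonal,
    show (fun i => (f (hX.eigenvalues i) : ℂ) * (g (hX.eigenvalues i) : ℂ)) =
      (fun i => (h (hX.eigenvalues i) : ℂ)) from funext fun i => by
        rw [← Complex.ofReal_mul, hfg i]]

lemma fc_add : fc hX f + fc hX g = fc hX (fun t => f t + g t) := by
  unfold fc
  rw [← Matrix.add_mul, ← Matrix.mul_add, diagonal_add]
  congr 2
  ext i
  push_cast
  ring

lemma fc_one : fc hX (fun _ => 1) = 1 := by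
  unfold fc
  simp [U_mul_star hX]

lemma fc_id : fc hX id = X := by
  unfold fc
  exact hX.spectral_theorem.symm

lemma fc_const (c : ℝ) : fc hX (fun _ => c) = (c : ℂ) • 1 := by
  unfold fc
  rw [show (diagonal (fun _ : Fin n => (c : ℂ))) = (c : ℂ) • 1 by
    rw [Matrix.smul_one_eq_diagonal]]
  rw [Matrix.mul_smul, Matrix.smul_mul, Matrix.mul_one, U_mul_star hX]

lemma fc_posSemidef (hf : ∀ i, 0 ≤ f (hX.eigenvalues i)) : (fc hX f).PosSemidef := by
  unfold fc
  apply Matrix.PosSemidef.mul_mul_conjTranspose_same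
  refine posSemidef_diagonal_iff.mpr fun i => ?_
  exact Complex.zero_le_real.mpr (hf i)

lemma fc_trace : (fc hX f).trace = ((∑ i, f (hX.eigenvalues i) : ℝ) : ℂ) := by
  unfold fc
  rw [Matrix.trace_mul_cycle, star_mul_U, Matrix.one_mul, Matrix.trace_diagonal]
  push_cast
  rfl



lemma psd_diag {M : Matrix (Fin n) (Fin n) ℂ} (hM : M.PosSemidef) (i : Fin n) :
    0 ≤ (M i i).re := by
  have := hM.re_dotProduct_nonneg (Pi.single i 1)
  simpa [Matrix.mulVec_single, dotProduct, Pi.single_apply, Finset.sum_ite_eq,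
    apply_ite] using this

lemma trace_re_nonneg {M : Matrix (Fin n) (Fin n) ℂ} (hM : M.PosSemidef) :
    0 ≤ M.trace.re := by
  rw [Matrix.trace, Complex.re_sum]
  exact Finset.sum_nonneg fun i _ => psd_diag hM i

lemma re_dot_mono {X Y : Matrix (Fin n) (Fin n) ℂ} (h : (Y - X).PosSemidef) (v : Fin n → ℂ) :
    (dotProduct (star v) (X *ᵥ v)).re ≤ (dotProduct (star v) (Y *ᵥ v)).re := by
  have := h.re_dotProduct_nonneg v
  simp only [Matrix.sub_mulVec, dotProduct_sub, Complex.sub_re, RCLike.re_to_complex] at this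
  linarith

lemma dot_self_eigenvector {X : Matrix (Fin n) (Fin n) ℂ} (hX : X.IsHermitian) (i : Fin n) :
    dotProduct (star ⇑(hX.eigenvectorBasis i)) ⇑(hX.eigenvectorBasis i) = 1 := by
  rw [dotProduct_comm, ← EuclideanSpace.inner_eq_star_dotProduct]
  rw [inner_self_eq_norm_sq_to_K, hX.eigenvectorBasis.orthonormal.1 i]
  norm_num

lemma eig_ge {X : Matrix (Fin n) (Fin n) ℂ} (hX : X.IsHermitian) (c : ℝ)
    (h : (X - (c : ℂ) • 1).PosSemidef) (i : Fin n) : c ≤ hX.eigenvalues i := by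
  set v : Fin n → ℂ := ⇑(hX.eigenvectorBasis i) with hv
  have h1 := re_dot_mono h v
  have h2 : dotProduct (star v) (((c:ℂ) • 1) *ᵥ v) = (c : ℂ) := by
    rw [Matrix.smul_mulVec, Matrix.one_mulVec, dotProduct_smul,
      hv, dot_self_eigenvector hX i, smul_eq_mul, mul_one]
  rw [h2] at h1
  have h3 : c ≤ (dotProduct (star v) (X *ᵥ v)).re := by
    simpa using h1
  rw [hX.eigenvalues_eq i]
  exact h3



lemma dot_sq {M : Matrix (Fin n) (Fin n) ℂ} (hM : M.IsHermitian) (v : Fin n → ℂ) :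
    dotProduct (star v) ((M * M) *ᵥ v) = dotProduct (star (M *ᵥ v)) (M *ᵥ v) := by
  rw [← Matrix.mulVec_mulVec, Matrix.dotProduct_mulVec, star_mulVec, hM.eq]

lemma sqrt_mono {S T : Matrix (Fin n) (Fin n) ℂ} (hS : S.PosSemidef) (hT : T.PosSemidef)
    (h : (T * T - S * S).PosSemidef) : (T - S).PosSemidef := by
  have hTS : (T - S).IsHermitian := hT.1.sub hS.1
  rw [hTS.spectral_theorem]
  apply Matrix.PosSemidef.mul_mul_conjTranspose_same
  refine posSemidef_diagonal_iff.mpr fun i => ?_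
  refine Complex.zero_le_real.mpr ?_
  by_contra hneg
  push_neg at hneg
  set μ := hTS.eigenvalues i with hμ
  set v : Fin n → ℂ := ⇑(hTS.eigenvectorBasis i) with hv
  have hvEq : (T - S) *ᵥ v = μ • v := hTS.mulVec_eigenvectorBasis i
  set ν : ℝ := -μ with hν
  have hneg' : μ < 0 := by simpa using hneg
  have hν0 : 0 < ν := by simp only [hν]; linarith
  have hSv : S *ᵥ v = T *ᵥ v + ν • v := by
    have : T *ᵥ v - S *ᵥ v = μ • v := by rw [← Matrix.sub_mulVec]; exact hvEq
    have := sub_eq_iff_eq_add.mp this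
    rw [this, hν]
    module
  have hb0 : 0 ≤ (dotProduct (star v) (T *ᵥ v)).re := hT.re_dotProduct_nonneg v
  have hvv : dotProduct (star v) v = 1 := dot_self_eigenvector hTS i
  have hconj : star (dotProduct (star v) (T *ᵥ v)) = dotProduct (star (T *ᵥ v)) v := by
    rw [Matrix.star_dotProduct, star_star]
  have hre : (dotProduct (star v) (T *ᵥ v)).re
      = (dotProduct (star (T *ᵥ v)) v).re := by
    rw [← hconj, Complex.star_def, Complex.conj_re]
  have expand : (dotProduct (star (S *ᵥ v)) (S *ᵥ v)).re
      = (dotProduct (star (T *ᵥ v)) (T *ᵥ v)).re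
        + 2 * ν * (dotProduct (star v) (T *ᵥ v)).re + ν ^ 2 := by
    rw [hSv]
    rw [star_add, star_smul]
    simp only [add_dotProduct, dotProduct_add, smul_dotProduct,
      dotProduct_smul, star_trivial]
    rw [hvv]
    simp only [Complex.real_smul, Complex.add_re, Complex.mul_re, Complex.ofReal_re,
      Complex.ofReal_im, Complex.one_re, Complex.one_im]
    linear_combination (μ : ℝ) * hre
  have hcmp : (dotProduct (star v) ((S * S) *ᵥ v)).re
      ≤ (dotProduct (star v) ((T * T) *ᵥ v)).re := re_dot_mono h v
  rw [dot_sq hS.1, dot_sq hT.1, expand] at hcmp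
  nlinarith [hb0, hν0]



/-- indicator of negativity -/
noncomputable def ind : ℝ → ℝ := fun t => if t < 0 then 1 else 0

lemma fc_sub {X : Matrix (Fin n) (Fin n) ℂ} (hX : X.IsHermitian) (f g : ℝ → ℝ) :
    fc hX f - fc hX g = fc hX (fun t => f t - g t) := by
  unfold fc
  rw [← Matrix.sub_mul, ← Matrix.mul_sub, diagonal_sub]
  congr 2
  funext i
  push_cast
  ring

lemma trace_mul_psd_nonneg {M N : Matrix (Fin n) (Fin n) ℂ} (hM : M.PosSemidef)
    (hN : N.PosSemidef) : 0 ≤ (M * N).trace.re := by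
  classical
  have hS := fc_posSemidef hM.1 Real.sqrt (fun i => Real.sqrt_nonneg _)
  have hSS : fc hM.1 Real.sqrt * fc hM.1 Real.sqrt = M := by
    have := fc_mul hM.1 Real.sqrt Real.sqrt id
      (fun i => Real.mul_self_sqrt (hM.eigenvalues_nonneg i))
    rwa [fc_id] at this
  have : M * N = fc hM.1 Real.sqrt * (fc hM.1 Real.sqrt * N) := by rw [← Matrix.mul_assoc, hSS]
  rw [this, Matrix.trace_mul_comm]
  have : fc hM.1 Real.sqrt * N * fc hM.1 Real.sqrt
      = fc hM.1 Real.sqrt * N * (fc hM.1 Real.sqrt)ᴴ := by rw [hS.1.eq]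
  rw [this]
  exact trace_re_nonneg (hN.mul_mul_conjTranspose_same _)

lemma trace_re_mono {X Y : Matrix (Fin n) (Fin n) ℂ} (h : (Y - X).PosSemidef) :
    X.trace.re ≤ Y.trace.re := by
  have := trace_re_nonneg h
  rw [Matrix.trace_sub, Complex.sub_re] at this
  linarith

lemma negTr_ge {X P : Matrix (Fin n) (Fin n) ℂ} (hX : X.IsHermitian) (hP : P.PosSemidef)
    (hP1 : (1 - P).PosSemidef) :
    -(X * P).trace.re ≤ ∑ i, max (-hX.eigenvalues i) 0 := by
  classical
  set U : Matrix (Fin n) (Fin n) ℂ := (hX.eigenvectorUnitary : Matrix (Fin n) (Fin n) ℂ) with hU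
  set Q : Matrix (Fin n) (Fin n) ℂ := star U * P * U with hQdef
  have hQ : Q.PosSemidef := hP.conjTranspose_mul_mul_same U
  have hQ1 : (1 - Q).PosSemidef := by
    have : (1 : Matrix (Fin n) (Fin n) ℂ) - Q = star U * (1 - P) * U := by
      rw [Matrix.mul_sub, Matrix.sub_mul, Matrix.mul_one, star_mul_U hX]
    rw [this]
    exact hP1.conjTranspose_mul_mul_same U
  have htr : (X * P).trace = ∑ i, (hX.eigenvalues i : ℂ) * Q i i := by
    nth_rewrite 1 [hX.spectral_theorem]
    rw [Unitary.conjStarAlgAut_apply, ← hU]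
    rw [Matrix.mul_assoc (U * diagonal (RCLike.ofReal ∘ hX.eigenvalues)) (star U) P,
      Matrix.trace_mul_comm, ← Matrix.mul_assoc]
    rw [Matrix.trace]
    congr 1
    funext i
    rw [Matrix.diag_apply, Matrix.mul_diagonal]
    simp only [Function.comp_apply, RCLike.ofReal_alg]
    rw [mul_comm]
    norm_num [hQdef]
  have hre : (X * P).trace.re = ∑ i, hX.eigenvalues i * (Q i i).re := by
    rw [htr, Complex.re_sum]
    congr 1
    funext i
    exact Complex.re_ofReal_mul _ _
  rw [hre, ← Finset.sum_neg_distrib]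
  apply Finset.sum_le_sum
  intro i _
  have hq0 : 0 ≤ (Q i i).re := psd_diag hQ i
  have hq1 : (Q i i).re ≤ 1 := by
    have := psd_diag hQ1 i
    simp only [Matrix.sub_apply, Matrix.one_apply_eq, Complex.sub_re, Complex.one_re] at this
    linarith
  calc -(hX.eigenvalues i * (Q i i).re) = (-hX.eigenvalues i) * (Q i i).re := by ring
    _ ≤ max (-hX.eigenvalues i) 0 * (Q i i).re :=
        mul_le_mul_of_nonneg_right (le_max_left _ _) hq0
    _ ≤ max (-hX.eigenvalues i) 0 * 1 :=
        mul_le_mul_of_nonneg_left hq1 (le_max_right _ _)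
    _ = max (-hX.eigenvalues i) 0 := mul_one _

lemma negTr_attained {X : Matrix (Fin n) (Fin n) ℂ} (hX : X.IsHermitian) :
    -(X * fc hX ind).trace.re = ∑ i, max (-hX.eigenvalues i) 0 := by
  nth_rewrite 1 [← fc_id hX]
  rw [fc_mul hX id ind (fun t => t * ind t) (fun i => rfl), fc_trace]
  rw [Complex.ofReal_re, ← Finset.sum_neg_distrib]
  congr 1
  funext i
  unfold ind
  rcases lt_or_ge (hX.eigenvalues i) 0 with hlt | hle
  · rw [if_pos hlt, mul_one, max_eq_left (by linarith)]
  · rw [if_neg (not_lt.mpr hle), mul_zero, neg_zero, max_eq_right (by linarith)]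

lemma negTr_mono {X Y : Matrix (Fin n) (Fin n) ℂ} (hX : X.IsHermitian) (hY : Y.IsHermitian)
    (hXY : (Y - X).PosSemidef) :
    ∑ i, max (-hY.eigenvalues i) 0 ≤ ∑ i, max (-hX.eigenvalues i) 0 := by
  have hP : (fc hY ind).PosSemidef := fc_posSemidef hY ind (fun i => by unfold ind; positivity)
  have hP1 : (1 - fc hY ind).PosSemidef := by
    rw [← fc_one hY, fc_sub hY]
    refine fc_posSemidef hY _ (fun i => ?_)
    unfold ind
    split <;> norm_num
  have key : 0 ≤ ((Y - X) * fc hY ind).trace.re := trace_mul_psd_nonneg hXY hP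
  rw [Matrix.sub_mul, Matrix.trace_sub, Complex.sub_re] at key
  have h1 := negTr_ge hX hP hP1
  rw [← negTr_attained hY]
  linarith

lemma negTr_of_nonpos {X : Matrix (Fin n) (Fin n) ℂ} (hX : X.IsHermitian)
    (h : (-X).PosSemidef) :
    ∑ i, max (-hX.eigenvalues i) 0 = -X.trace.re := by
  have heig : ∀ i, hX.eigenvalues i ≤ 0 := by
    intro i
    set v : Fin n → ℂ := ⇑(hX.eigenvectorBasis i) with hv
    have h0 := h.re_dotProduct_nonneg v
    simp only [Matrix.neg_mulVec, dotProduct_neg, map_neg] at h0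
    have hle : RCLike.re (dotProduct (star v) (X *ᵥ v)) ≤ 0 := by linarith
    rw [hX.eigenvalues_eq i]
    exact hle
  have htr : X.trace = ((∑ i, hX.eigenvalues i : ℝ) : ℂ) := by
    nth_rewrite 1 [← fc_id hX]; exact fc_trace hX id
  rw [htr, Complex.ofReal_re, ← Finset.sum_neg_distrib]
  congr 1
  funext i
  rw [max_eq_left (by linarith [heig i])]

lemma trace_CS (X Y : Matrix (Fin n) (Fin n) ℂ) :
    ((Xᴴ * Y).trace.re) ^ 2 ≤ (Xᴴ * X).trace.re * (Yᴴ * Y).trace.re := by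
  classical
  have habs : ∀ Z W : Matrix (Fin n) (Fin n) ℂ,
      (Zᴴ * W).trace.re = ∑ p : Fin n × Fin n, ((starRingEnd ℂ) (Z p.2 p.1) * W p.2 p.1).re := by
    intro Z W
    rw [Matrix.trace, Complex.re_sum]
    simp only [Matrix.diag_apply, Matrix.mul_apply, Matrix.conjTranspose_apply, Complex.re_sum]
    rw [← Finset.sum_product']
    rfl
  have hsq : ∀ Z : Matrix (Fin n) (Fin n) ℂ, ∀ p : Fin n × Fin n,
      ((starRingEnd ℂ) (Z p.2 p.1) * Z p.2 p.1).re = ‖Z p.2 p.1‖ ^ 2 := by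
    intro Z p
    rw [mul_comm, Complex.mul_conj]
    rw [← Complex.normSq_eq_norm_sq]
    exact Complex.ofReal_re _
  rw [habs X Y, habs X X, habs Y Y]
  simp only [hsq]
  calc (∑ p : Fin n × Fin n, ((starRingEnd ℂ) (X p.2 p.1) * Y p.2 p.1).re) ^ 2
      ≤ (∑ p : Fin n × Fin n, ‖X p.2 p.1‖ * ‖Y p.2 p.1‖) ^ 2 := by
        apply sq_le_sq'
        · rw [← Finset.sum_neg_distrib]
          apply Finset.sum_le_sum
          intro p _
          calc -(‖X p.2 p.1‖ * ‖Y p.2 p.1‖)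
              = -‖(starRingEnd ℂ) (X p.2 p.1) * Y p.2 p.1‖ := by
                rw [norm_mul, Complex.norm_conj]
            _ ≤ ((starRingEnd ℂ) (X p.2 p.1) * Y p.2 p.1).re := by
                have := Complex.abs_re_le_norm ((starRingEnd ℂ) (X p.2 p.1) * Y p.2 p.1)
                have h' := abs_le.mp this
                linarith [h'.1]
        · apply Finset.sum_le_sum
          intro p _
          calc ((starRingEnd ℂ) (X p.2 p.1) * Y p.2 p.1).re
              ≤ ‖(starRingEnd ℂ) (X p.2 p.1) * Y p.2 p.1‖ := Complex.re_le_norm _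
            _ = ‖X p.2 p.1‖ * ‖Y p.2 p.1‖ := by
                rw [norm_mul, Complex.norm_conj]
    _ ≤ (∑ p : Fin n × Fin n, ‖X p.2 p.1‖ ^ 2) *
          (∑ p : Fin n × Fin n, ‖Y p.2 p.1‖ ^ 2) :=
        Finset.sum_mul_sq_le_sq_mul_sq _ _ _

lemma inv_antitone {V U R S iV : Matrix (Fin n) (Fin n) ℂ}
    (hUV : (V - U).PosSemidef) (hR : R.IsHermitian) (hV : V.IsHermitian)
    (hRS : R * S = 1) (hSR : S * R = 1) (hRUR : R * U * R = 1)
    (hiV1 : iV * V = 1) (hiV2 : V * iV = 1) :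
    (R * R - iV).PosSemidef := by
  set W : Matrix (Fin n) (Fin n) ℂ := R * V * R with hWdef
  have hW : W.IsHermitian := by
    rw [Matrix.IsHermitian, hWdef, Matrix.conjTranspose_mul, Matrix.conjTranspose_mul,
      hR.eq, hV.eq, Matrix.mul_assoc]
  have hW1 : (W - 1).PosSemidef := by
    have : W - 1 = R * (V - U) * Rᴴ := by
      rw [hR.eq, Matrix.mul_sub, Matrix.sub_mul, hRUR, hWdef]
    rw [this]
    exact hUV.mul_mul_conjTranspose_same R
  have weig : ∀ i, 1 ≤ hW.eigenvalues i := by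
    intro i
    refine eig_ge hW 1 ?_ i
    rwa [show ((1:ℝ):ℂ) • (1 : Matrix (Fin n) (Fin n) ℂ) = 1 by norm_num]
  have weig0 : ∀ i, hW.eigenvalues i ≠ 0 := fun i => by have := weig i; positivity
  set iW := fc hW (fun t => t⁻¹) with hiWdef
  have hiWW : iW * W = 1 := by
    have h0 : iW * fc hW id = fc hW (fun _ => 1) :=
      fc_mul hW _ _ _ (fun i => inv_mul_cancel₀ (weig0 i))
    rwa [fc_id, fc_one] at h0
  have hWiW : W * iW = 1 := by
    have h0 : fc hW id * iW = fc hW (fun _ => 1) :=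
      fc_mul hW _ _ _ (fun i => mul_inv_cancel₀ (weig0 i))
    rwa [fc_id, fc_one] at h0
  have e1 : W * (S * iV * S) = 1 := by
    rw [hWdef]
    simp only [Matrix.mul_assoc]
    rw [← Matrix.mul_assoc R S (iV * S), hRS, Matrix.one_mul,
      ← Matrix.mul_assoc V iV S, hiV2, Matrix.one_mul, hRS]
  have huniq : iW = S * iV * S := by
    have h2 : iW * (W * (S * iV * S)) = S * iV * S := by
      rw [← Matrix.mul_assoc, hiWW, Matrix.one_mul]
    rw [e1, Matrix.mul_one] at h2
    exact h2
  have hX0 : (fc hW (fun t => 1 - t⁻¹)).PosSemidef := by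
    refine fc_posSemidef hW _ (fun i => ?_)
    have h1 := weig i
    have h2 : (hW.eigenvalues i)⁻¹ ≤ 1 := by
      rw [inv_le_one_iff₀]
      right; exact h1
    linarith
  have hXeq : fc hW (fun t => 1 - t⁻¹) = 1 - iW := by
    rw [← fc_one hW, hiWdef, fc_sub]
  have hfinal : (R * (1 - iW) * Rᴴ).PosSemidef := by
    rw [← hXeq]; exact hX0.mul_mul_conjTranspose_same R
  have : R * (1 - iW) * Rᴴ = R * R - iV := by
    rw [hR.eq, Matrix.mul_sub, Matrix.sub_mul, Matrix.mul_one, huniq]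
    refine congrArg (R * R - ·) ?_
    simp only [Matrix.mul_assoc]
    rw [hSR, Matrix.mul_one, ← Matrix.mul_assoc, hRS, Matrix.one_mul]
  rwa [this] at hfinal

lemma smul_one_psd (ε : ℝ) (hε : 0 ≤ ε) : ((ε:ℂ) • (1 : Matrix (Fin n) (Fin n) ℂ)).PosSemidef := by
  rw [Matrix.smul_one_eq_diagonal]
  exact posSemidef_diagonal_iff.mpr fun i => Complex.zero_le_real.mpr hε

lemma smul_one_herm (ε : ℝ) : ((ε:ℂ) • (1 : Matrix (Fin n) (Fin n) ℂ)).IsHermitian := by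
  rw [Matrix.IsHermitian, Matrix.conjTranspose_smul, Matrix.conjTranspose_one,
    Complex.star_def, Complex.conj_ofReal]

end BKS

open BKS

/-- BKS inequality, finite-dimensional case: for positive semidefinite
Hermitian matrices `A`, `B`, `Tr [A - B]₋ ≤ Tr ([A² - B²]₋)^{1/2}`, where
`Tr [X]₋ = Σᵢ max(-λᵢ, 0)` and `Tr ([X]₋)^{1/2} = Σᵢ √(max(-λᵢ, 0))` over the
eigenvalues `λᵢ` of the Hermitian matrix `X`. -/
theorem stmt9 {n : ℕ} (A B : Matrix (Fin n) (Fin n) ℂ)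
    (hA : A.PosSemidef) (hB : B.PosSemidef)
    (h1 : (A - B).IsHermitian) (h2 : (A * A - B * B).IsHermitian) :
    ∑ i, max (-h1.eigenvalues i) 0 ≤ ∑ i, Real.sqrt (max (-h2.eigenvalues i) 0) := by
  classical
  have hA1 := hA.1
  set g : ℝ → ℝ := fun t => Real.sqrt (max (-t) 0) with hg
  set N := fc h2 g with hNdef
  have hNH : N.IsHermitian := fc_isHermitian h2 g
  have hNpsd : N.PosSemidef := fc_posSemidef h2 g (fun i => Real.sqrt_nonneg _)
  have hNN : N * N = fc h2 (fun t => max (-t) 0) :=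
    fc_mul h2 g g _ (fun i => Real.mul_self_sqrt (le_max_right _ 0))
  have hRHS : N.trace.re = ∑ i, g (h2.eigenvalues i) := by
    rw [hNdef, fc_trace, Complex.ofReal_re]
  have hAA : (A * A).PosSemidef := by
    have := Matrix.posSemidef_conjTranspose_mul_self A
    rwa [hA1.eq] at this
  have hNN' : (N * N).PosSemidef := by
    have := Matrix.posSemidef_conjTranspose_mul_self N
    rwa [hNH.eq] at this
  have hKpsd : (A * A + N * N).PosSemidef := hAA.add hNN'
  set T := fc hKpsd.1 Real.sqrt with hTdef
  have hTH : T.IsHermitian := fc_isHermitian hKpsd.1 _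
  have hTpsd : T.PosSemidef := fc_posSemidef hKpsd.1 _ (fun i => Real.sqrt_nonneg _)
  have hTT : T * T = A * A + N * N := by
    have := fc_mul hKpsd.1 Real.sqrt Real.sqrt id
      (fun i => Real.mul_self_sqrt (hKpsd.eigenvalues_nonneg i))
    rwa [fc_id] at this
  -- B ≤ T and A ≤ T
  have hTB : (T - B).PosSemidef := by
    refine sqrt_mono hB hTpsd ?_
    rw [hTT]
    have e : A*A + N*N - B*B = (A*A - B*B) + N*N := by abel
    rw [e]
    nth_rewrite 1 [← fc_id h2]
    rw [hNN, fc_add h2]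
    refine fc_posSemidef h2 _ (fun i => ?_)
    have := le_max_left (-(h2.eigenvalues i)) 0
    simp only [id]
    linarith
  have hTA : (T - A).PosSemidef := by
    refine sqrt_mono hA hTpsd ?_
    rw [hTT]
    have e : A*A + N*N - A*A = N*N := by abel
    rw [e]; exact hNN'
  -- reduce to trace bound
  have h3 : (A - T).IsHermitian := hA1.sub hTH
  have step1 : (∑ i, max (-h1.eigenvalues i) 0) ≤ ∑ i, max (-h3.eigenvalues i) 0 := by
    refine negTr_mono h3 h1 ?_
    have e : (A - B) - (A - T) = T - B := by abel
    rw [e]; exact hTB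
  have step2 : ∑ i, max (-h3.eigenvalues i) 0 = T.trace.re - A.trace.re := by
    rw [negTr_of_nonpos h3 (by rw [neg_sub]; exact hTA), Matrix.trace_sub, Complex.sub_re]
    ring
  set c := A.trace.re + N.trace.re with hc
  have hc0 : 0 ≤ c := add_nonneg (trace_re_nonneg hA) (trace_re_nonneg hNpsd)
  have hT0 : 0 ≤ T.trace.re := trace_re_nonneg hTpsd
  -- the key epsilon bound
  have key : ∀ ε : ℝ, 0 < ε → T.trace.re ^ 2 ≤ (c + ε * n) * c := by
    intro ε hε
    set Z' := A + N + (ε:ℂ) • (1 : Matrix (Fin n) (Fin n) ℂ) with hZdef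
    have hZH : Z'.IsHermitian := (hA1.add hNH).add (smul_one_herm ε)
    have hZpsd : Z'.PosSemidef := (hA.add hNpsd).add (smul_one_psd ε hε.le)
    have hZeig : ∀ i, ε ≤ hZH.eigenvalues i := by
      intro i
      refine eig_ge hZH ε ?_ i
      have e : Z' - (ε:ℂ) • 1 = A + N := by rw [hZdef]; abel
      rw [e]; exact hA.add hNpsd
    have hZpos : ∀ i, 0 < hZH.eigenvalues i := fun i => lt_of_lt_of_le hε (hZeig i)
    set iZ := fc hZH (fun t => t⁻¹) with hiZdef
    have hiZH : iZ.IsHermitian := fc_isHermitian hZH _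
    have hiZ1 : iZ * Z' = 1 := by
      have h0 : iZ * fc hZH id = fc hZH (fun _ => 1) :=
        fc_mul hZH _ _ _ (fun i => inv_mul_cancel₀ (ne_of_gt (hZpos i)))
      rwa [fc_id, fc_one] at h0
    have hZiZ : Z' * iZ = 1 := by
      have h0 : fc hZH id * iZ = fc hZH (fun _ => 1) :=
        fc_mul hZH _ _ _ (fun i => mul_inv_cancel₀ (ne_of_gt (hZpos i)))
      rwa [fc_id, fc_one] at h0
    -- A-side inverse comparison
    have boundA : (A * iZ * A).trace.re ≤ A.trace.re := by
      set sA : ℝ → ℝ := fun t => Real.sqrt (t + ε) with hsAdef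
      have hsA_pos : ∀ i, 0 < sA (hA1.eigenvalues i) := fun i =>
        Real.sqrt_pos.mpr (by have := hA.eigenvalues_nonneg i; linarith)
      have hsA_sq : ∀ i, sA (hA1.eigenvalues i) * sA (hA1.eigenvalues i)
          = hA1.eigenvalues i + ε := fun i =>
        Real.mul_self_sqrt (by have := hA.eigenvalues_nonneg i; linarith)
      set RA := fc hA1 (fun t => (sA t)⁻¹) with hRAdef
      set SA := fc hA1 sA with hSAdef
      have hRAH : RA.IsHermitian := fc_isHermitian hA1 _
      have hRASA : RA * SA = 1 := by
        have h0 : RA * SA = fc hA1 (fun _ => 1) :=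
          fc_mul hA1 _ _ _ (fun i => inv_mul_cancel₀ (ne_of_gt (hsA_pos i)))
        rwa [fc_one] at h0
      have hSARA : SA * RA = 1 := by
        have h0 : SA * RA = fc hA1 (fun _ => 1) :=
          fc_mul hA1 _ _ _ (fun i => mul_inv_cancel₀ (ne_of_gt (hsA_pos i)))
        rwa [fc_one] at h0
      have hUA : A + (ε:ℂ) • 1 = fc hA1 (fun t => t + ε) := by
        have h0 := fc_add hA1 id (fun _ => ε)
        rw [fc_id, fc_const] at h0
        exact h0
      have hRUR : RA * (A + (ε:ℂ) • 1) * RA = 1 := by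
        rw [hUA]
        have e1 : RA * fc hA1 (fun t => t + ε) = fc hA1 (fun t => (sA t)⁻¹ * (t + ε)) :=
          fc_mul hA1 _ _ _ (fun i => rfl)
        have e2 : fc hA1 (fun t => (sA t)⁻¹ * (t + ε)) * RA = fc hA1 (fun _ => 1) := by
          refine fc_mul hA1 _ _ _ (fun i => ?_)
          rw [← hsA_sq i]
          field_simp
          exact div_self (ne_of_gt (hsA_pos i))
        rw [e1, e2, fc_one]
      have happ1 : (RA * RA - iZ).PosSemidef := by
        refine inv_antitone ?_ hRAH hZH hRASA hSARA hRUR hiZ1 hZiZ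
        have e : Z' - (A + (ε:ℂ) • 1) = N := by rw [hZdef]; abel
        rw [e]; exact hNpsd
      have hRARA : RA * RA = fc hA1 (fun t => (t + ε)⁻¹) := by
        refine fc_mul hA1 _ _ _ (fun i => ?_)
        rw [← mul_inv, hsA_sq i]
      have hmono : (A * iZ * A).trace.re ≤ (A * (RA * RA) * A).trace.re := by
        refine trace_re_mono ?_
        have e : A * (RA * RA) * A - A * iZ * A = A * (RA * RA - iZ) * Aᴴ := by
          rw [hA1.eq, Matrix.mul_sub, Matrix.sub_mul]
        rw [e]
        exact happ1.mul_mul_conjTranspose_same A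
      have e1 : A * fc hA1 (fun t => (t + ε)⁻¹) = fc hA1 (fun t => t * (t + ε)⁻¹) := by
        have h0 := fc_mul hA1 id (fun t => (t + ε)⁻¹) (fun t => t * (t + ε)⁻¹) (fun i => rfl)
        rwa [fc_id] at h0
      have e2 : fc hA1 (fun t => t * (t + ε)⁻¹) * A
          = fc hA1 (fun t => t * (t + ε)⁻¹ * t) := by
        have h0 := fc_mul hA1 (fun t => t * (t + ε)⁻¹) id
          (fun t => t * (t + ε)⁻¹ * t) (fun i => rfl)
        rwa [fc_id] at h0
      have hval : (A * (RA * RA) * A).trace.re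
          = ∑ i, hA1.eigenvalues i * (hA1.eigenvalues i + ε)⁻¹ * hA1.eigenvalues i := by
        rw [hRARA, e1, e2, fc_trace, Complex.ofReal_re]
      have hAtr : A.trace.re = ∑ i, hA1.eigenvalues i := by
        have h0 := fc_trace hA1 id
        rw [fc_id] at h0
        rw [h0, Complex.ofReal_re]
        rfl
      rw [hval] at hmono
      rw [hAtr]
      refine le_trans hmono (Finset.sum_le_sum fun i _ => ?_)
      have h0 := hA.eigenvalues_nonneg i
      have hpos : 0 < hA1.eigenvalues i + ε := by linarith
      have e3 : hA1.eigenvalues i * (hA1.eigenvalues i + ε)⁻¹ * hA1.eigenvalues i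
          = hA1.eigenvalues i ^ 2 / (hA1.eigenvalues i + ε) := by
        rw [div_eq_mul_inv]; ring
      rw [e3, div_le_iff₀ hpos]
      nlinarith
    have boundN : (N * iZ * N).trace.re ≤ N.trace.re := by
      set sN : ℝ → ℝ := fun t => Real.sqrt (g t + ε) with hsNdef
      have hg0 : ∀ t : ℝ, 0 ≤ g t := fun t => Real.sqrt_nonneg _
      have hsN_pos : ∀ i, 0 < sN (h2.eigenvalues i) := fun i =>
        Real.sqrt_pos.mpr (by have := hg0 (h2.eigenvalues i); linarith)
      have hsN_sq : ∀ i, sN (h2.eigenvalues i) * sN (h2.eigenvalues i)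
          = g (h2.eigenvalues i) + ε := fun i =>
        Real.mul_self_sqrt (by have := hg0 (h2.eigenvalues i); linarith)
      set RN := fc h2 (fun t => (sN t)⁻¹) with hRNdef
      set SN := fc h2 sN with hSNdef
      have hRNH : RN.IsHermitian := fc_isHermitian h2 _
      have hRNSN : RN * SN = 1 := by
        have h0 : RN * SN = fc h2 (fun _ => 1) :=
          fc_mul h2 _ _ _ (fun i => inv_mul_cancel₀ (ne_of_gt (hsN_pos i)))
        rwa [fc_one] at h0
      have hSNRN : SN * RN = 1 := by
        have h0 : SN * RN = fc h2 (fun _ => 1) :=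
          fc_mul h2 _ _ _ (fun i => mul_inv_cancel₀ (ne_of_gt (hsN_pos i)))
        rwa [fc_one] at h0
      have hUN : N + (ε:ℂ) • 1 = fc h2 (fun t => g t + ε) := by
        have h0 := fc_add h2 g (fun _ => ε)
        rw [fc_const] at h0
        exact h0
      have hRUR : RN * (N + (ε:ℂ) • 1) * RN = 1 := by
        rw [hUN]
        have e1 : RN * fc h2 (fun t => g t + ε) = fc h2 (fun t => (sN t)⁻¹ * (g t + ε)) :=
          fc_mul h2 _ _ _ (fun i => rfl)
        have e2 : fc h2 (fun t => (sN t)⁻¹ * (g t + ε)) * RN = fc h2 (fun _ => 1) := by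
          refine fc_mul h2 _ _ _ (fun i => ?_)
          rw [← hsN_sq i]
          field_simp
          exact div_self (ne_of_gt (hsN_pos i))
        rw [e1, e2, fc_one]
      have happ2 : (RN * RN - iZ).PosSemidef := by
        refine inv_antitone ?_ hRNH hZH hRNSN hSNRN hRUR hiZ1 hZiZ
        have e : Z' - (N + (ε:ℂ) • 1) = A := by rw [hZdef]; abel
        rw [e]; exact hA
      have hRNRN : RN * RN = fc h2 (fun t => (g t + ε)⁻¹) := by
        refine fc_mul h2 _ _ _ (fun i => ?_)
        rw [← mul_inv, hsN_sq i]
      have hmono : (N * iZ * N).trace.re ≤ (N * (RN * RN) * N).trace.re := by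
        refine trace_re_mono ?_
        have e : N * (RN * RN) * N - N * iZ * N = N * (RN * RN - iZ) * Nᴴ := by
          rw [hNH.eq, Matrix.mul_sub, Matrix.sub_mul]
        rw [e]
        exact happ2.mul_mul_conjTranspose_same N
      have e1 : N * fc h2 (fun t => (g t + ε)⁻¹) = fc h2 (fun t => g t * (g t + ε)⁻¹) :=
        fc_mul h2 _ _ _ (fun i => rfl)
      have e2 : fc h2 (fun t => g t * (g t + ε)⁻¹) * N
          = fc h2 (fun t => g t * (g t + ε)⁻¹ * g t) :=
        fc_mul h2 _ _ _ (fun i => rfl)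
      have hval : (N * (RN * RN) * N).trace.re
          = ∑ i, g (h2.eigenvalues i) * (g (h2.eigenvalues i) + ε)⁻¹ * g (h2.eigenvalues i) := by
        rw [hRNRN, e1, e2, fc_trace, Complex.ofReal_re]
      rw [hval] at hmono
      rw [hRHS]
      refine le_trans hmono (Finset.sum_le_sum fun i _ => ?_)
      have h0 := hg0 (h2.eigenvalues i)
      have hpos : 0 < g (h2.eigenvalues i) + ε := by linarith
      have e3 : g (h2.eigenvalues i) * (g (h2.eigenvalues i) + ε)⁻¹ * g (h2.eigenvalues i)
          = g (h2.eigenvalues i) ^ 2 / (g (h2.eigenvalues i) + ε) := by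
        rw [div_eq_mul_inv]; ring
      rw [e3, div_le_iff₀ hpos]
      nlinarith
    -- Cauchy-Schwarz step
    set Zh := fc hZH Real.sqrt with hZhdef
    set Rh := fc hZH (fun t => (Real.sqrt t)⁻¹) with hRhdef
    have hZhH : Zh.IsHermitian := fc_isHermitian hZH _
    have hRhH : Rh.IsHermitian := fc_isHermitian hZH _
    have hsqpos : ∀ i, 0 < Real.sqrt (hZH.eigenvalues i) := fun i =>
      Real.sqrt_pos.mpr (hZpos i)
    have hZhRh : Zh * Rh = 1 := by
      have h0 : Zh * Rh = fc hZH (fun _ => 1) :=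
        fc_mul hZH _ _ _ (fun i => mul_inv_cancel₀ (ne_of_gt (hsqpos i)))
      rwa [fc_one] at h0
    have hZhZh : Zh * Zh = Z' := by
      have h0 : Zh * Zh = fc hZH id :=
        fc_mul hZH _ _ _ (fun i => Real.mul_self_sqrt (hZpos i).le)
      rwa [fc_id] at h0
    have hRhRh : Rh * Rh = iZ := by
      refine fc_mul hZH _ _ _ (fun i => ?_)
      rw [← mul_inv, Real.mul_self_sqrt (hZpos i).le]
    have hCS := trace_CS Zh (Rh * T)
    have p1 : Zhᴴ * (Rh * T) = T := by
      rw [hZhH.eq, ← Matrix.mul_assoc, hZhRh, Matrix.one_mul]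
    have p2 : Zhᴴ * Zh = Z' := by rw [hZhH.eq, hZhZh]
    have p3 : (Rh * T)ᴴ * (Rh * T) = T * iZ * T := by
      rw [Matrix.conjTranspose_mul, hRhH.eq, hTH.eq, Matrix.mul_assoc T Rh (Rh * T),
        ← Matrix.mul_assoc Rh Rh T, hRhRh, ← Matrix.mul_assoc]
    rw [p1, p2, p3] at hCS
    have htr3 : (T * iZ * T).trace.re = (A * iZ * A).trace.re + (N * iZ * N).trace.re := by
      have q1 : (T * iZ * T).trace = ((T * T) * iZ).trace := by
        rw [Matrix.trace_mul_comm, ← Matrix.mul_assoc]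
      have q2 : ((A * A) * iZ).trace = (A * iZ * A).trace := by
        rw [Matrix.mul_assoc, Matrix.trace_mul_comm, Matrix.mul_assoc]
      have q3 : ((N * N) * iZ).trace = (N * iZ * N).trace := by
        rw [Matrix.mul_assoc, Matrix.trace_mul_comm, Matrix.mul_assoc]
      rw [q1, hTT, Matrix.add_mul, Matrix.trace_add, q2, q3, Complex.add_re]
    have hZtr : Z'.trace.re = c + ε * n := by
      rw [hZdef, Matrix.trace_add, Matrix.trace_add, Matrix.trace_smul, Matrix.trace_one]
      simp only [Complex.add_re, smul_eq_mul]
      rw [hc]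
      congr 1
      rw [Complex.mul_re]
      simp
    rw [hZtr, htr3] at hCS
    calc T.trace.re ^ 2 ≤ (c + ε * n) * ((A * iZ * A).trace.re + (N * iZ * N).trace.re) := hCS
      _ ≤ (c + ε * n) * c := by
        refine mul_le_mul_of_nonneg_left ?_ (by positivity)
        rw [hc]
        exact add_le_add boundA boundN
  -- pass to the limit
  have hsq : T.trace.re ^ 2 ≤ c ^ 2 := by
    refine le_of_forall_pos_le_add fun δ hδ => ?_
    have hnc : (0:ℝ) ≤ (n:ℝ) * c := by positivity
    set ε := δ / ((n:ℝ) * c + 1) with hεdef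
    have hε : 0 < ε := by positivity
    have h1 := key ε hε
    have h3 : ε * ((n:ℝ) * c + 1) = δ := div_mul_cancel₀ _ (by positivity)
    calc T.trace.re ^ 2 ≤ (c + ε * n) * c := h1
      _ = c ^ 2 + ε * ((n:ℝ) * c) := by ring
      _ ≤ c ^ 2 + δ := by nlinarith
  have hfin : T.trace.re ≤ c := by nlinarith
  have final : (∑ i, max (-h1.eigenvalues i) 0) ≤ N.trace.re := by
    rw [hc] at hfin
    calc (∑ i, max (-h1.eigenvalues i) 0) ≤ ∑ i, max (-h3.eigenvalues i) 0 := step1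
      _ = T.trace.re - A.trace.re := step2
      _ ≤ N.trace.re := by linarith
  rw [hRHS] at final
  exact final
end

section
/- Generalized min-max comparison: let H be a self-adjoint operator bounded below on a Hilbert space and F a bounded operator with ‖F‖ ≤ 1. Then the sum of the negative eigenvalues of F* H F is at least the sum of the negative eigenvalues of H: Tr[F* H F]₋ ≤ Tr[H]₋. -/
open Matrix
open scoped ComplexOrder

lemma aux_adj {n : ℕ} (F : Matrix (Fin n) (Fin n) ℂ)
    (hF : (1 - Fᴴ * F).PosSemidef) : (1 - F * Fᴴ).PosSemidef := by
  set e : (Fin n → ℂ) → EuclideanSpace ℂ (Fin n) := fun v => (WithLp.equiv 2 (Fin n → ℂ)).symm v with he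
  have inner_eq : ∀ u v : Fin n → ℂ, (inner ℂ (e u) (e v) : ℂ) = star u ⬝ᵥ v := by
    intro u v; rw [EuclideanSpace.inner_eq_star_dotProduct, dotProduct_comm]; rfl
  have normsq : ∀ u : Fin n → ℂ, (star u ⬝ᵥ u) = ((‖e u‖ : ℂ))^2 := by
    intro u; rw [← inner_eq, inner_self_eq_norm_sq_to_K]; norm_cast
  have key : ∀ z : Fin n → ℂ, (star (F *ᵥ z)) ⬝ᵥ (F *ᵥ z) ≤ (star z) ⬝ᵥ z := by
    intro z
    have h := hF.dotProduct_mulVec_nonneg z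
    rw [sub_mulVec, dotProduct_sub, one_mulVec, ← mulVec_mulVec] at h
    have h2 : star z ⬝ᵥ (Fᴴ *ᵥ (F *ᵥ z)) = star (F *ᵥ z) ⬝ᵥ (F *ᵥ z) := by
      rw [dotProduct_mulVec, star_mulVec]
    rw [h2] at h
    exact sub_nonneg.mp h
  have hnorm : ∀ z : Fin n → ℂ, ‖e (F *ᵥ z)‖ ≤ ‖e z‖ := by
    intro z
    have h := key z
    rw [normsq, normsq] at h
    have h' : ‖e (F *ᵥ z)‖ ^ 2 ≤ ‖e z‖ ^ 2 := by
      have := h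
      push_cast at this
      exact_mod_cast this
    have := Real.sqrt_le_sqrt h'
    rwa [Real.sqrt_sq (norm_nonneg _), Real.sqrt_sq (norm_nonneg _)] at this
  refine .of_dotProduct_mulVec_nonneg ((isHermitian_one).sub (isHermitian_mul_conjTranspose_self F)) fun x => ?_
  rw [sub_mulVec, dotProduct_sub, one_mulVec, ← mulVec_mulVec, sub_nonneg]
  have h3 : star x ⬝ᵥ (F *ᵥ (Fᴴ *ᵥ x)) = star (Fᴴ *ᵥ x) ⬝ᵥ (Fᴴ *ᵥ x) := by
    rw [dotProduct_mulVec, star_mulVec, conjTranspose_conjTranspose]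
  rw [h3]
  set y := Fᴴ *ᵥ x with hy
  -- show ‖e y‖ ≤ ‖e x‖
  have hxy : ‖e y‖ ≤ ‖e x‖ := by
    have h4 : (‖e y‖:ℝ) ^ 2 = (inner ℂ (e (F *ᵥ y)) (e x) : ℂ).re := by
      rw [inner_eq]
      have h5 : star (F *ᵥ y) ⬝ᵥ x = star y ⬝ᵥ y := by
        rw [star_mulVec, ← dotProduct_mulVec, hy]
      rw [h5, normsq, ← Complex.ofReal_pow, Complex.ofReal_re]
    have h6 : (inner ℂ (e (F *ᵥ y)) (e x) : ℂ).re ≤ ‖e (F *ᵥ y)‖ * ‖e x‖ :=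
      (Complex.re_le_norm _) |>.trans (norm_inner_le_norm (𝕜 := ℂ) _ _)
    have h7 : ‖e (F *ᵥ y)‖ * ‖e x‖ ≤ ‖e y‖ * ‖e x‖ :=
      mul_le_mul_of_nonneg_right (hnorm y) (norm_nonneg _)
    have h8 : ‖e y‖ ^ 2 ≤ ‖e y‖ * ‖e x‖ := by linarith
    nlinarith [norm_nonneg (e x), norm_nonneg (e y)]
  rw [normsq, normsq]
  have : (‖e y‖:ℝ)^2 ≤ ‖e x‖^2 := by nlinarith [norm_nonneg (e y)]
  exact_mod_cast Complex.real_le_real.mpr this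


lemma aux_diag_nonneg {n : ℕ} {M : Matrix (Fin n) (Fin n) ℂ} (hM : M.PosSemidef)
    (i : Fin n) : 0 ≤ M i i := by
  simpa [Matrix.mulVec_single, dotProduct, Pi.single_apply] using hM.dotProduct_mulVec_nonneg (Pi.single i 1)

lemma aux_trace {n : ℕ} (X Q : Matrix (Fin n) (Fin n) ℂ) (hX : X.IsHermitian)
    (hQ : Q.PosSemidef) (hQ1 : (1 - Q).PosSemidef) :
    ∑ i, min (hX.eigenvalues i) 0 ≤ (Matrix.trace (X * Q)).re := by
  set U : Matrix (Fin n) (Fin n) ℂ := (hX.eigenvectorUnitary : Matrix (Fin n) (Fin n) ℂ) with hU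
  set D : Matrix (Fin n) (Fin n) ℂ := diagonal (RCLike.ofReal ∘ hX.eigenvalues) with hD
  have hUU : Uᴴ * U = 1 := by
    rw [← star_eq_conjTranspose]
    exact mem_unitaryGroup_iff'.mp (hX.eigenvectorUnitary).2
  set Q' : Matrix (Fin n) (Fin n) ℂ := Uᴴ * Q * U with hQ'def
  have htr : Matrix.trace (X * Q) = Matrix.trace (D * Q') := by
    conv_lhs => rw [hX.spectral_theorem, Unitary.conjStarAlgAut_apply]
    rw [star_eq_conjTranspose, ← hU, ← hD, hQ'def,
      mul_assoc (U * D), trace_mul_comm, ← mul_assoc, trace_mul_comm]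
  have hQ'psd : Q'.PosSemidef := hQ.conjTranspose_mul_mul_same U
  have hQ'1 : (1 - Q').PosSemidef := by
    have := hQ1.conjTranspose_mul_mul_same U
    have heq : Uᴴ * (1 - Q) * U = 1 - Q' := by
      rw [mul_sub, sub_mul, mul_one, hUU, hQ'def]
    rwa [heq] at this
  have hq0 : ∀ i, 0 ≤ (Q' i i).re := fun i => (Complex.nonneg_iff.mp (aux_diag_nonneg hQ'psd i)).1
  have hq1 : ∀ i, (Q' i i).re ≤ 1 := by
    intro i
    have := (Complex.nonneg_iff.mp (aux_diag_nonneg hQ'1 i)).1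
    simp only [Matrix.sub_apply, Matrix.one_apply_eq, Complex.sub_re, Complex.one_re] at this
    linarith
  have htr2 : Matrix.trace (D * Q') = ∑ i, (hX.eigenvalues i : ℂ) * Q' i i := by
    simp [Matrix.trace, Matrix.diag, hD, Matrix.diagonal_mul]
  rw [htr, htr2]
  rw [Complex.re_sum]
  refine Finset.sum_le_sum fun i _ => ?_
  have hre : ((hX.eigenvalues i : ℂ) * Q' i i).re = hX.eigenvalues i * (Q' i i).re := by
    simp [Complex.mul_re]
  rw [hre]
  rcases le_or_gt 0 (hX.eigenvalues i) with h | h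
  · calc min (hX.eigenvalues i) 0 ≤ 0 := min_le_right _ _
      _ ≤ _ := mul_nonneg h (hq0 i)
  · calc min (hX.eigenvalues i) 0 ≤ hX.eigenvalues i := min_le_left _ _
      _ ≤ _ := by nlinarith [hq0 i, hq1 i]


/-- generalized min-max comparison, finite-dimensional form: if `H` is
self-adjoint and `‖F‖ ≤ 1` (expressed as `F* F ≤ 1`), then
`Tr [F* H F]₋ ≤ Tr [H]₋`, where `Tr [X]₋ = Σᵢ max(-λᵢ, 0)` over the eigenvalues of
the Hermitian matrix `X`. -/
theorem stmt13 {n : ℕ} (Hm F : Matrix (Fin n) (Fin n) ℂ)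
    (hH : Hm.IsHermitian)
    (hF : (1 - Fᴴ * F).PosSemidef)
    (h1 : (Fᴴ * Hm * F).IsHermitian) :
    ∑ i, max (-h1.eigenvalues i) 0 ≤ ∑ i, max (-hH.eigenvalues i) 0 := by
  classical
  set U : Matrix (Fin n) (Fin n) ℂ := (h1.eigenvectorUnitary : Matrix (Fin n) (Fin n) ℂ) with hU
  set D : Matrix (Fin n) (Fin n) ℂ := diagonal (RCLike.ofReal ∘ h1.eigenvalues) with hD
  set e : Fin n → ℂ := fun i => if h1.eigenvalues i < 0 then 1 else 0 with he
  set E : Matrix (Fin n) (Fin n) ℂ := diagonal e with hE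
  have hUU : Uᴴ * U = 1 := by
    rw [← star_eq_conjTranspose]
    exact mem_unitaryGroup_iff'.mp (h1.eigenvectorUnitary).2
  have hUU' : U * Uᴴ = 1 := by
    rw [← star_eq_conjTranspose]
    exact mem_unitaryGroup_iff.mp (h1.eigenvectorUnitary).2
  set P : Matrix (Fin n) (Fin n) ℂ := U * E * Uᴴ with hP
  have hEpsd : E.PosSemidef := .diagonal (fun i => by by_cases h : h1.eigenvalues i < 0 <;> simp [he, h])
  have hE1psd : (1 - E).PosSemidef := by
    have : (1 : Matrix (Fin n) (Fin n) ℂ) - E = diagonal (fun i => 1 - e i) := by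
      rw [hE, ← diagonal_one, diagonal_sub]
    rw [this]
    exact .diagonal (fun i => by by_cases h : h1.eigenvalues i < 0 <;> simp [he, h])
  have hPpsd : P.PosSemidef := hEpsd.mul_mul_conjTranspose_same U
  have hP1psd : (1 - P).PosSemidef := by
    have : (1 : Matrix (Fin n) (Fin n) ℂ) - P = U * (1 - E) * Uᴴ := by
      rw [mul_sub, sub_mul, mul_one, hUU', hP]
    rw [this]
    exact hE1psd.mul_mul_conjTranspose_same U
  -- Q := F * P * Fᴴ
  set Q : Matrix (Fin n) (Fin n) ℂ := F * P * Fᴴ with hQ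
  have hQpsd : Q.PosSemidef := hPpsd.mul_mul_conjTranspose_same F
  have hQ1psd : (1 - Q).PosSemidef := by
    have : (1 : Matrix (Fin n) (Fin n) ℂ) - Q = (1 - F * Fᴴ) + F * (1 - P) * Fᴴ := by
      rw [hQ, mul_sub, sub_mul, mul_one]
      abel
    rw [this]
    exact (aux_adj F hF).add (hP1psd.mul_mul_conjTranspose_same F)
  -- trace identity
  have htr1 : Matrix.trace ((Fᴴ * Hm * F) * P) = Matrix.trace (Hm * Q) := by
    rw [hQ, mul_assoc, trace_mul_comm, ← mul_assoc, ← mul_assoc, ← mul_assoc, trace_mul_comm]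
  have htr2 : Matrix.trace ((Fᴴ * Hm * F) * P)
      = ∑ i, (h1.eigenvalues i : ℂ) * e i := by
    conv_lhs => rw [h1.spectral_theorem, Unitary.conjStarAlgAut_apply]
    rw [star_eq_conjTranspose, ← hU, ← hD, hP]
    have : U * D * Uᴴ * (U * E * Uᴴ) = U * (D * E) * Uᴴ := by
      rw [mul_assoc (U*D) Uᴴ _, ← mul_assoc Uᴴ (U*E) Uᴴ, ← mul_assoc Uᴴ U E, hUU, one_mul, ← mul_assoc (U*D) E Uᴴ, mul_assoc U D E]
    rw [this, trace_mul_comm, ← mul_assoc, hUU, one_mul, hD, hE, diagonal_mul_diagonal, trace_diagonal]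
    exact Finset.sum_congr rfl fun i _ => rfl
  have hval : (Matrix.trace ((Fᴴ * Hm * F) * P)).re = ∑ i, min (h1.eigenvalues i) 0 := by
    rw [htr2, Complex.re_sum]
    refine Finset.sum_congr rfl fun i _ => ?_
    by_cases h : h1.eigenvalues i < 0
    · simp [he, h, min_eq_left h.le]
    · simp [he, h, min_eq_right (not_lt.mp h)]
  have hmain := aux_trace Hm Q hH hQpsd hQ1psd
  have hneg : ∀ (f : Fin n → ℝ), (∑ i, max (-(f i)) 0) = -∑ i, min (f i) 0 := by
    intro f
    rw [← Finset.sum_neg_distrib]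
    exact Finset.sum_congr rfl fun i _ => by rw [← neg_zero, max_neg_neg, neg_zero]
  rw [hneg h1.eigenvalues, hneg hH.eigenvalues, ← hval, htr1]
  linarith
end

section
/- Isometry onto the positive subspace: let P₁⁺,…,P_N⁺ be commuting orthogonal projections on a Hilbert space H, and U₁,…,U_N commuting unitaries with U_j² = -1, U_j P_j⁺ U_j* = 1 - P_j⁺ =: P_j⁻, and U_j commuting with P_k^± for k ≠ j. Let K ⊆ H be the subspace of vectors ψ with U_j ψ = iψ for all j. Then for every ψ ∈ K, ‖P⁺ψ‖² = 2^{-N}‖ψ‖², where P⁺ = Π_j P_j⁺; hence 2^{N/2}P⁺ is an isometry from K into P⁺H. -/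
open ContinuousLinearMap in
lemma key18 {H : Type*} [NormedAddCommGroup H] [InnerProductSpace ℂ H]
    [CompleteSpace H] (P U : H →L[ℂ] H)
    (hPsa : IsSelfAdjoint P) (hPidem : P * P = P)
    (hUl : adjoint U * U = 1)
    (hUsq : U * U = -1)
    (hUP : U * P * adjoint U = 1 - P)
    (ψ : H) (hψ : U ψ = Complex.I • ψ) :
    ‖P ψ‖ ^ 2 = (1 / 2 : ℝ) * ‖ψ‖ ^ 2 := by
  have hUiso : ∀ x : H, ‖U x‖ = ‖x‖ := by
    intro x
    have h1 : (inner ℂ (U x) (U x) : ℂ) = inner ℂ x x := by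
      rw [← ContinuousLinearMap.adjoint_inner_right]
      have : adjoint U (U x) = x := by
        have := congrArg (fun (T : H →L[ℂ] H) => T x) hUl
        simpa using this
      rw [this]
    rw [@norm_eq_sqrt_re_inner ℂ, @norm_eq_sqrt_re_inner ℂ, h1]
  have hUadj : adjoint U = -U := by
    have h1 : adjoint U * (U * U) = -adjoint U := by rw [hUsq, mul_neg_one]
    have h2 : adjoint U * (U * U) = U := by rw [← mul_assoc, hUl, one_mul]
    have h3 : -adjoint U = U := h1 ▸ h2
    exact neg_eq_iff_eq_neg.mp h3
  -- orthogonal decomposition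
  have horth : (inner ℂ (P ψ) (ψ - P ψ) : ℂ) = 0 := by
    have hadj : adjoint P = P := hPsa
    nth_rewrite 1 [← hadj]
    rw [ContinuousLinearMap.adjoint_inner_left]
    have : P (ψ - P ψ) = 0 := by
      have := congrArg (fun (T : H →L[ℂ] H) => T ψ) hPidem
      simp only [ContinuousLinearMap.mul_apply] at this
      simp [map_sub, this]
    rw [this, inner_zero_right]
  have hdecomp : ‖ψ‖ ^ 2 = ‖P ψ‖ ^ 2 + ‖ψ - P ψ‖ ^ 2 := by
    have h := norm_add_sq_eq_norm_sq_add_norm_sq_of_inner_eq_zero (P ψ) (ψ - P ψ) horth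
    have hsum : P ψ + (ψ - P ψ) = ψ := by abel
    rw [hsum] at h
    rw [pow_two, pow_two, pow_two]
    exact h
  have hminus : ‖ψ - P ψ‖ = ‖P ψ‖ := by
    have h1 : ψ - P ψ = (U * P * adjoint U) ψ := by
      rw [hUP]; simp [ContinuousLinearMap.sub_apply]
    have h2 : adjoint U ψ = (-Complex.I) • ψ := by
      rw [hUadj]; simp [hψ]
    rw [h1]
    simp only [ContinuousLinearMap.mul_apply, h2, map_smul]
    rw [norm_smul, hUiso]
    simp
  rw [hminus] at hdecomp
  linarith

open ContinuousLinearMap in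
lemma aux18 {H : Type*} [NormedAddCommGroup H] [InnerProductSpace ℂ H]
    [CompleteSpace H] : ∀ (N : ℕ)
    (P U : Fin N → (H →L[ℂ] H)),
    (∀ j, IsSelfAdjoint (P j)) → (∀ j, P j * P j = P j) →
    (∀ j, adjoint (U j) * (U j) = 1) →
    (∀ j, U j * U j = -1) →
    (∀ j, U j * P j * adjoint (U j) = 1 - P j) →
    (∀ j k, j ≠ k → U j * P k = P k * U j) →
    ∀ (ψ : H), (∀ j, U j ψ = Complex.I • ψ) →
    ‖(List.ofFn P).prod ψ‖ ^ 2 = (1 / 2 : ℝ) ^ N * ‖ψ‖ ^ 2 := by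
  intro N
  induction N with
  | zero => intro P U _ _ _ _ _ _ ψ _; simp
  | succ n ih =>
    intro P U hPsa hPidem hUl hUsq hUP hUPcomm ψ hψ
    rw [List.ofFn_succ, List.prod_cons]
    set Q := (List.ofFn fun i : Fin n => P i.succ).prod with hQ
    have hQcomm : Commute (U 0) Q := by
      apply Commute.list_prod_right
      intro x hx
      rw [List.mem_ofFn] at hx
      obtain ⟨i, rfl⟩ := hx
      exact hUPcomm 0 i.succ (Fin.succ_ne_zero i).symm
    have hφ : U 0 (Q ψ) = Complex.I • (Q ψ) := by
      have := congrArg (fun (T : H →L[ℂ] H) => T ψ) hQcomm.eq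
      simp only [ContinuousLinearMap.mul_apply] at this
      rw [this, hψ 0, map_smul]
    have hstep := key18 (P 0) (U 0) (hPsa 0) (hPidem 0) (hUl 0) (hUsq 0) (hUP 0)
      (Q ψ) hφ
    have hrec := ih (fun i => P i.succ) (fun i => U i.succ)
      (fun i => hPsa i.succ) (fun i => hPidem i.succ) (fun i => hUl i.succ)
      (fun i => hUsq i.succ) (fun i => hUP i.succ)
      (fun j k hjk => hUPcomm j.succ k.succ (fun h => hjk (Fin.succ_injective n h)))
      ψ (fun i => hψ i.succ)
    simp only [ContinuousLinearMap.mul_apply]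
    rw [hstep, hrec]
    ring

/-- isometry onto the positive subspace: let `P₁⁺, …, P_N⁺` be
commuting orthogonal projections on a Hilbert space and `U₁, …, U_N` commuting
unitaries with `U_j² = -1`, `U_j P_j⁺ U_j* = 1 - P_j⁺`, and `U_j` commuting with
`P_k⁺` for `k ≠ j`. If `U_j ψ = iψ` for all `j`, then `‖P⁺ψ‖² = 2^{-N} ‖ψ‖²` where
`P⁺ = Π_j P_j⁺`; hence `2^{N/2} P⁺` is an isometry on the subspace of such `ψ`. -/
theorem stmt18 {H : Type*} [NormedAddCommGroup H] [InnerProductSpace ℂ H]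
    [CompleteSpace H] (N : ℕ)
    (P U : Fin N → (H →L[ℂ] H))
    (hPsa : ∀ j, IsSelfAdjoint (P j)) (hPidem : ∀ j, P j * P j = P j)
    (hPcomm : ∀ j k, P j * P k = P k * P j)
    (hUunit : ∀ j, (U j) * ContinuousLinearMap.adjoint (U j) = 1
        ∧ ContinuousLinearMap.adjoint (U j) * (U j) = 1)
    (hUsq : ∀ j, U j * U j = -1)
    (hUcomm : ∀ j k, U j * U k = U k * U j)
    (hUP : ∀ j, U j * P j * ContinuousLinearMap.adjoint (U j) = 1 - P j)
    (hUPcomm : ∀ j k, j ≠ k → U j * P k = P k * U j)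
    (ψ : H) (hψ : ∀ j, U j ψ = Complex.I • ψ) :
    ‖(List.ofFn P).prod ψ‖ ^ 2 = (1 / 2 : ℝ) ^ N * ‖ψ‖ ^ 2 :=
  aux18 N P U hPsa hPidem (fun j => (hUunit j).2) hUsq hUP hUPcomm ψ hψ
end
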